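/- arXiv:1008.3519 — 6 statements merged into one kernel-verified Lean document; each statement's English description precedes it below -/
import Mathlib

section
/- Generalized drift-plus-penalty theorem: Let Ψ(t) ≥ 0 and β(t) be stochastic processes with Ψ(0) finite almost surely. Let δ(t) = Ψ(t+1) − Ψ(t), and let H(t) be the history {Ψ(0),...,Ψ(t), β(0),...,β(t−1)}. Suppose E[δ(t)²] and E[β(t)²] are finite for all t, that ∑_{t=1}^∞ (E[δ(t)²] + E[β(t)²])/t² < ∞, and that E[δ(t) + β(t) | H(t)] ≤ 0 almost surely for all t. Then limsup_{t→∞} (1/t) ∑_{τ=0}^{t−1} β(τ) ≤ 0 with probability 1. -/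
/-!
Put `X(t) = δ(t) + β(t)`. The drift condition gives `X(t) ≤ X(t) - E[X(t) | H(t)]`, and since the
`δ`'s telescope and `Ψ ≥ 0`,
`∑_{τ<t} β(τ) ≤ Ψ(0) + ∑_{τ<t} (X(τ) - E[X(τ) | H(τ)])`.
The summands on the right are martingale differences whose second moments are at most
`E[X(τ)²] ≤ 2 (E[δ(τ)²] + E[β(τ)²])`. Hence the martingale `∑_τ (X(τ) - E[X(τ) | H(τ)]) / (τ + 1)`
is bounded in `L²` and converges almost surely, and Kronecker's lemma turns this into
`(1/t) ∑_{τ<t} (X(τ) - E[X(τ) | H(τ)]) → 0`.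
-/

open MeasureTheory ProbabilityTheory Filter Topology

/-- The history σ-algebra `H(t)` generated by `Ψ(0), ..., Ψ(t)` and `β(0), ..., β(t-1)`. -/
def genHist {Ω : Type*} [MeasurableSpace Ω] (Ψ β : ℕ → Ω → ℝ) (t : ℕ) : MeasurableSpace Ω :=
  (⨆ i ∈ Finset.range (t + 1), MeasurableSpace.comap (Ψ i) inferInstance) ⊔
    (⨆ i ∈ Finset.range t, MeasurableSpace.comap (β i) inferInstance)

open Finset

/-- Kronecker's lemma. -/
lemma tendsto_sum_range_div_of_tendsto_sum_div_succ {a : ℕ → ℝ} {c : ℝ}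
    (h : Tendsto (fun n : ℕ => ∑ k ∈ range n, a k / (k + 1)) atTop (𝓝 c)) :
    Tendsto (fun n : ℕ => (∑ k ∈ range n, a k) / n) atTop (𝓝 0) := by
  set S : ℕ → ℝ := fun n => ∑ k ∈ range n, a k / (k + 1)
  have abel : ∀ n : ℕ, ∑ k ∈ range n, a k = n * S n - ∑ k ∈ range n, S k := by
    intro n
    induction n with
    | zero => simp
    | succ n ih =>
      simp only [S, sum_range_succ] at ih ⊢
      rw [ih]
      push_cast
      field_simp
      ring
  have hcesaro : Tendsto (fun n : ℕ => S n - (n : ℝ)⁻¹ * ∑ k ∈ range n, S k) atTop (𝓝 0) := by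
    simpa using h.sub h.cesaro
  refine hcesaro.congr' ?_
  filter_upwards [eventually_ne_atTop 0] with n hn
  rw [abel n]
  field_simp

section CondExp

variable {Ω : Type*} {m m₀ : MeasurableSpace Ω} {μ : Measure[m₀] Ω} [IsFiniteMeasure μ]

lemma integral_add_sq_of_condExp_eq_zero (hm : m ≤ m₀) {g D : Ω → ℝ}
    (hg : StronglyMeasurable[m] g) (hg2 : MemLp g 2 μ) (hD2 : MemLp D 2 μ)
    (hD : μ[D|m] =ᵐ[μ] 0) :
    ∫ ω, (g ω + D ω) ^ 2 ∂μ = ∫ ω, g ω ^ 2 ∂μ + ∫ ω, D ω ^ 2 ∂μ := by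
  have hgD : Integrable (g * D) μ := memLp_one_iff_integrable.1 (hD2.mul hg2)
  have hcross : ∫ ω, g ω * D ω ∂μ = 0 := by
    calc ∫ ω, g ω * D ω ∂μ = ∫ ω, (μ[g * D|m]) ω ∂μ := (integral_condExp hm).symm
      _ = ∫ ω, g ω * (μ[D|m]) ω ∂μ :=
        integral_congr_ae <|
          condExp_mul_of_stronglyMeasurable_left hg hgD (hD2.integrable one_le_two)
      _ = 0 := by
        rw [integral_congr_ae (hD.mono fun ω hω => by rw [hω, Pi.zero_apply, mul_zero])]
        simp
  have hexp : ∀ ω, (g ω + D ω) ^ 2 = g ω ^ 2 + 2 * (g ω * D ω) + D ω ^ 2 := fun ω => by ring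
  have hcrossInt : Integrable (fun ω => 2 * (g ω * D ω)) μ := hgD.const_mul 2
  have hleadInt : Integrable (fun ω => g ω ^ 2 + 2 * (g ω * D ω)) μ :=
    hg2.integrable_sq.add hcrossInt
  simp_rw [hexp]
  rw [integral_add hleadInt hD2.integrable_sq, integral_add hg2.integrable_sq hcrossInt,
    integral_const_mul, hcross]
  ring

lemma condExp_sub_condExp_ae_eq_zero (hm : m ≤ m₀) {X : Ω → ℝ} (hX : Integrable X μ) :
    μ[X - μ[X|m]|m] =ᵐ[μ] 0 := by
  filter_upwards [condExp_sub hX integrable_condExp m] with ω hω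
  rw [hω, condExp_of_stronglyMeasurable hm stronglyMeasurable_condExp integrable_condExp]
  simp

lemma integral_sq_sub_condExp_le (hm : m ≤ m₀) {X : Ω → ℝ} (hX : MemLp X 2 μ) :
    ∫ ω, (X ω - (μ[X|m]) ω) ^ 2 ∂μ ≤ ∫ ω, X ω ^ 2 ∂μ := by
  have hpyth := integral_add_sq_of_condExp_eq_zero hm stronglyMeasurable_condExp
    (hX.condExp one_le_two) (hX.sub (hX.condExp one_le_two))
    (condExp_sub_condExp_ae_eq_zero hm (hX.integrable one_le_two))
  simp only [Pi.sub_apply, add_sub_cancel] at hpyth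
  have hnonneg : 0 ≤ ∫ ω, (μ[X|m]) ω ^ 2 ∂μ := integral_nonneg fun ω => sq_nonneg _
  linarith

end CondExp

lemma eLpNorm_one_le_of_integral_sq_le {Ω : Type*} {m₀ : MeasurableSpace Ω}
    {μ : Measure[m₀] Ω} [IsFiniteMeasure μ] {f : Ω → ℝ} (hf : MemLp f 2 μ) {C : ℝ}
    (hC : ∫ ω, f ω ^ 2 ∂μ ≤ C) :
    eLpNorm f 1 μ ≤ ENNReal.ofReal (μ.real Set.univ + C) := by
  rw [eLpNorm_one_eq_lintegral_enorm,
    ← ofReal_integral_norm_eq_lintegral_enorm (hf.integrable one_le_two)]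
  refine ENNReal.ofReal_le_ofReal ?_
  have habs : ∀ ω, ‖f ω‖ ≤ 1 + f ω ^ 2 := fun ω => by
    rw [Real.norm_eq_abs]
    nlinarith [sq_nonneg (|f ω| - 1), sq_abs (f ω)]
  calc ∫ ω, ‖f ω‖ ∂μ ≤ ∫ ω, 1 + f ω ^ 2 ∂μ :=
        integral_mono (hf.integrable one_le_two).norm
          ((integrable_const 1).add hf.integrable_sq) habs
    _ = μ.real Set.univ + ∫ ω, f ω ^ 2 ∂μ := by
        rw [integral_add (integrable_const 1) hf.integrable_sq, integral_const, smul_eq_mul,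
          mul_one]
    _ ≤ μ.real Set.univ + C := by linarith

lemma integral_add_sq_le {Ω : Type*} {m₀ : MeasurableSpace Ω} {μ : Measure[m₀] Ω}
    {f g : Ω → ℝ} (hf : MemLp f 2 μ) (hg : MemLp g 2 μ) :
    ∫ ω, (f ω + g ω) ^ 2 ∂μ ≤ 2 * (∫ ω, f ω ^ 2 ∂μ + ∫ ω, g ω ^ 2 ∂μ) := by
  have hf2 := hf.integrable_sq.const_mul 2
  have hg2 := hg.integrable_sq.const_mul 2
  rw [mul_add, ← integral_const_mul, ← integral_const_mul, ← integral_add hf2 hg2]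
  exact integral_mono (hf.add hg).integrable_sq (hf2.add hg2) fun ω => by
    nlinarith [sq_nonneg (f ω - g ω)]

/-- `d k` is the increment from time `k` to time `k + 1`. -/
structure IsL2MartingaleDiff {Ω : Type*} {m₀ : MeasurableSpace Ω} (ℱ : Filtration ℕ m₀)
    (d : ℕ → Ω → ℝ) (μ : Measure[m₀] Ω) : Prop where
  stronglyMeasurable : ∀ k, StronglyMeasurable[ℱ (k + 1)] (d k)
  memLp : ∀ k, MemLp (d k) 2 μ
  condExp_ae_eq_zero : ∀ k, μ[d k|ℱ k] =ᵐ[μ] 0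

namespace IsL2MartingaleDiff

variable {Ω : Type*} {m₀ : MeasurableSpace Ω} {μ : Measure[m₀] Ω}
  {ℱ : Filtration ℕ m₀} {d : ℕ → Ω → ℝ}

lemma mul_left (hd : IsL2MartingaleDiff ℱ d μ) (c : ℕ → ℝ) :
    IsL2MartingaleDiff ℱ (fun k ω => c k * d k ω) μ where
  stronglyMeasurable k := (hd.stronglyMeasurable k).const_mul _
  memLp k := (hd.memLp k).const_mul _
  condExp_ae_eq_zero k := by
    change μ[c k • d k|ℱ k] =ᵐ[μ] 0
    filter_upwards [condExp_smul (m := ℱ k) (μ := μ) (c k) (d k), hd.condExp_ae_eq_zero k]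
      with ω hsmul hzero
    simpa [hzero] using hsmul

lemma stronglyMeasurable_sum (hd : IsL2MartingaleDiff ℱ d μ) (n : ℕ) :
    StronglyMeasurable[ℱ n] (fun ω => ∑ k ∈ range n, d k ω) :=
  Finset.stronglyMeasurable_fun_sum _ fun k hk =>
    (hd.stronglyMeasurable k).mono (ℱ.mono (mem_range.1 hk))

lemma memLp_sum (hd : IsL2MartingaleDiff ℱ d μ) (n : ℕ) :
    MemLp (fun ω => ∑ k ∈ range n, d k ω) 2 μ :=
  memLp_finsetSum _ fun k _ => hd.memLp k

lemma martingale_sum [IsFiniteMeasure μ] (hd : IsL2MartingaleDiff ℱ d μ) :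
    Martingale (fun n ω => ∑ k ∈ range n, d k ω) ℱ μ := by
  refine martingale_nat hd.stronglyMeasurable_sum (fun n => (hd.memLp_sum n).integrable one_le_two)
    fun n => ?_
  have hsum := (hd.memLp_sum n).integrable one_le_two
  filter_upwards [condExp_add hsum ((hd.memLp n).integrable one_le_two) (ℱ n),
    hd.condExp_ae_eq_zero n] with ω hadd hzero
  simp only [sum_range_succ]
  change _ = μ[(fun ω => ∑ k ∈ range n, d k ω) + d n|ℱ n] ω
  rw [hadd, Pi.add_apply, hzero,
    condExp_of_stronglyMeasurable (ℱ.le n) (hd.stronglyMeasurable_sum n) hsum]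
  simp

lemma integral_sum_sq [IsFiniteMeasure μ] (hd : IsL2MartingaleDiff ℱ d μ) (n : ℕ) :
    ∫ ω, (∑ k ∈ range n, d k ω) ^ 2 ∂μ = ∑ k ∈ range n, ∫ ω, d k ω ^ 2 ∂μ := by
  induction n with
  | zero => simp
  | succ n ih =>
    simp_rw [sum_range_succ]
    rw [integral_add_sq_of_condExp_eq_zero (ℱ.le n) (hd.stronglyMeasurable_sum n)
      (hd.memLp_sum n) (hd.memLp n) (hd.condExp_ae_eq_zero n), ih]

/-- Orthogonality of the increments bounds the partial sums in `L²`, hence in `L¹`, so the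
martingale convergence theorem applies. -/
lemma ae_exists_tendsto_sum [IsFiniteMeasure μ] (hd : IsL2MartingaleDiff ℱ d μ)
    (hsum : Summable fun k => ∫ ω, d k ω ^ 2 ∂μ) :
    ∀ᵐ ω ∂μ, ∃ c, Tendsto (fun n => ∑ k ∈ range n, d k ω) atTop (𝓝 c) := by
  have hbound : ∀ n, ∫ ω, (∑ k ∈ range n, d k ω) ^ 2 ∂μ ≤ ∑' k, ∫ ω, d k ω ^ 2 ∂μ := fun n => by
    rw [hd.integral_sum_sq n]
    exact hsum.sum_le_tsum _ fun k _ => integral_nonneg fun ω => sq_nonneg _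
  have hL1 : ∀ n, eLpNorm (fun ω => ∑ k ∈ range n, d k ω) 1 μ
      ≤ (μ.real Set.univ + ∑' k, ∫ ω, d k ω ^ 2 ∂μ).toNNReal := fun n =>
    eLpNorm_one_le_of_integral_sq_le (hd.memLp_sum n) (hbound n)
  filter_upwards [hd.martingale_sum.submartingale.ae_tendsto_limitProcess hL1] with ω hω
  exact ⟨_, hω⟩

lemma ae_tendsto_sum_div [IsFiniteMeasure μ] (hd : IsL2MartingaleDiff ℱ d μ)
    (hsum : Summable fun k : ℕ => (∫ ω, d k ω ^ 2 ∂μ) / (k + 1) ^ 2) :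
    ∀ᵐ ω ∂μ, Tendsto (fun n : ℕ => (∑ k ∈ range n, d k ω) / n) atTop (𝓝 0) := by
  have hscaled := hd.mul_left fun k => ((k : ℝ) + 1)⁻¹
  have hsum' : Summable fun k : ℕ => ∫ ω, (((k : ℝ) + 1)⁻¹ * d k ω) ^ 2 ∂μ := by
    refine hsum.congr fun k => ?_
    simp_rw [mul_pow, integral_const_mul]
    field_simp
  filter_upwards [hscaled.ae_exists_tendsto_sum hsum'] with ω ⟨c, hc⟩
  refine tendsto_sum_range_div_of_tendsto_sum_div_succ (c := c) (hc.congr fun n => ?_)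
  simp_rw [div_eq_inv_mul]

end IsL2MartingaleDiff

lemma isL2MartingaleDiff_sub_condExp {Ω : Type*} {m₀ : MeasurableSpace Ω} {μ : Measure[m₀] Ω}
    [IsFiniteMeasure μ] {ℱ : Filtration ℕ m₀} {X : ℕ → Ω → ℝ}
    (hXm : ∀ k, StronglyMeasurable[ℱ (k + 1)] (X k)) (hX : ∀ k, MemLp (X k) 2 μ) :
    IsL2MartingaleDiff ℱ (fun k => X k - μ[X k|ℱ k]) μ where
  stronglyMeasurable k :=
    (hXm k).sub (stronglyMeasurable_condExp.mono (ℱ.mono k.le_succ))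
  memLp k := (hX k).sub ((hX k).condExp one_le_two)
  condExp_ae_eq_zero k := condExp_sub_condExp_ae_eq_zero (ℱ.le k) ((hX k).integrable one_le_two)

lemma ae_tendsto_sum_sub_condExp_div {Ω : Type*} {m₀ : MeasurableSpace Ω}
    {μ : Measure[m₀] Ω} [IsFiniteMeasure μ] {ℱ : Filtration ℕ m₀} {X : ℕ → Ω → ℝ}
    (hXm : ∀ k, StronglyMeasurable[ℱ (k + 1)] (X k)) (hX : ∀ k, MemLp (X k) 2 μ)
    (hsum : Summable fun k : ℕ => (∫ ω, X k ω ^ 2 ∂μ) / (k + 1) ^ 2) :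
    ∀ᵐ ω ∂μ, Tendsto (fun n : ℕ => (∑ k ∈ range n, (X k ω - (μ[X k|ℱ k]) ω)) / n)
      atTop (𝓝 0) := by
  refine (isL2MartingaleDiff_sub_condExp hXm hX).ae_tendsto_sum_div
    (hsum.of_nonneg_of_le (fun k => by positivity) fun k => ?_)
  exact div_le_div_of_nonneg_right (integral_sq_sub_condExp_le (ℱ.le k) (hX k)) (by positivity)

lemma limsup_sum_range_div_le_zero {ψ b u : ℕ → ℝ} (hψ : ∀ t, 0 ≤ ψ t)
    (hdrift : ∀ t, ψ (t + 1) - ψ t + b t ≤ u t)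
    (hu : Tendsto (fun n : ℕ => (∑ k ∈ range n, u k) / n) atTop (𝓝 0)) :
    limsup (fun n : ℕ => (((∑ k ∈ range n, b k) / n : ℝ) : EReal)) atTop ≤ 0 := by
  have htelescope : ∀ n, ∑ k ∈ range n, b k ≤ ∑ k ∈ range n, u k + ψ 0 := fun n => by
    have h := sum_le_sum fun k (_ : k ∈ range n) => hdrift k
    rw [sum_add_distrib, sum_range_sub (fun k => ψ k)] at h
    linarith [hψ n]
  have hbound : Tendsto (fun n : ℕ => (∑ k ∈ range n, u k) / n + ψ 0 / n) atTop (𝓝 0) := by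
    simpa using hu.add (tendsto_const_div_atTop_nhds_zero_nat (ψ 0))
  calc limsup (fun n : ℕ => (((∑ k ∈ range n, b k) / n : ℝ) : EReal)) atTop
      ≤ limsup (fun n : ℕ => (((∑ k ∈ range n, u k) / n + ψ 0 / n : ℝ) : EReal)) atTop := by
        refine limsup_le_limsup (Eventually.of_forall fun n => EReal.coe_le_coe_iff.2 ?_)
        rw [← add_div]
        exact div_le_div_of_nonneg_right (htelescope n) n.cast_nonneg
    _ = 0 := (EReal.tendsto_coe.2 hbound).limsup_eq

section History

variable {Ω : Type*} [MeasurableSpace Ω] {Ψ β : ℕ → Ω → ℝ}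

lemma genHist_mono : Monotone (genHist Ψ β) := fun s t hst =>
  sup_le_sup (biSup_mono fun i hi => mem_range.2 ((mem_range.1 hi).trans_le (by omega)))
    (biSup_mono fun i hi => mem_range.2 ((mem_range.1 hi).trans_le hst))

lemma genHist_le (hΨ : ∀ t, Measurable (Ψ t)) (hβ : ∀ t, Measurable (β t)) (t : ℕ) :
    genHist Ψ β t ≤ ‹MeasurableSpace Ω› :=
  sup_le (iSup₂_le fun i _ => (hΨ i).comap_le) (iSup₂_le fun i _ => (hβ i).comap_le)

lemma measurable_genHist_left {i t : ℕ} (hit : i ≤ t) : Measurable[genHist Ψ β t] (Ψ i) :=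
  measurable_iff_comap_le.2 <| le_sup_of_le_left <|
    le_iSup₂ (f := fun i (_ : i ∈ range (t + 1)) => MeasurableSpace.comap (Ψ i) inferInstance) i
      (mem_range.2 (Nat.lt_succ_of_le hit))

lemma measurable_genHist_right {i t : ℕ} (hit : i < t) : Measurable[genHist Ψ β t] (β i) :=
  measurable_iff_comap_le.2 <| le_sup_of_le_right <|
    le_iSup₂ (f := fun i (_ : i ∈ range t) => MeasurableSpace.comap (β i) inferInstance) i
      (mem_range.2 hit)

def histFiltration (hΨ : ∀ t, Measurable (Ψ t)) (hβ : ∀ t, Measurable (β t)) :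
    Filtration ℕ ‹MeasurableSpace Ω› :=
  ⟨genHist Ψ β, genHist_mono, genHist_le hΨ hβ⟩

end History

theorem generalized_drift_plus_penalty_general
    {Ω : Type*} [MeasureSpace Ω] [IsProbabilityMeasure (ℙ : Measure Ω)]
    (Ψ β : ℕ → Ω → ℝ)
    (hΨm : ∀ t, Measurable (Ψ t)) (hβm : ∀ t, Measurable (β t))
    (hΨpos : ∀ t ω, 0 ≤ Ψ t ω)
    (hδ2 : ∀ t, Integrable (fun ω => (Ψ (t + 1) ω - Ψ t ω) ^ 2) ℙ)
    (hβ2 : ∀ t, Integrable (fun ω => (β t ω) ^ 2) ℙ)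
    (hsum : Summable (fun t : ℕ =>
      ((∫ ω, (Ψ (t + 1) ω - Ψ t ω) ^ 2 ∂(ℙ : Measure Ω)) +
        ∫ ω, (β t ω) ^ 2 ∂(ℙ : Measure Ω)) / (t : ℝ) ^ 2))
    (hdrift : ∀ t, ∀ᵐ ω ∂(ℙ : Measure Ω),
      ((ℙ : Measure Ω)[fun ω' => (Ψ (t + 1) ω' - Ψ t ω') + β t ω' | genHist Ψ β t]) ω ≤ 0) :
    ∀ᵐ ω ∂(ℙ : Measure Ω),
      Filter.limsup
        (fun t : ℕ => (((∑ τ ∈ Finset.range t, β τ ω) / (t : ℝ) : ℝ) : EReal)) atTop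
      ≤ (0 : EReal) := by
  set ℱ := histFiltration hΨm hβm
  set X : ℕ → Ω → ℝ := fun t ω => (Ψ (t + 1) ω - Ψ t ω) + β t ω
  have hδL2 : ∀ t, MemLp (fun ω => Ψ (t + 1) ω - Ψ t ω) 2 ℙ := fun t =>
    (memLp_two_iff_integrable_sq ((hΨm (t + 1)).sub (hΨm t)).aestronglyMeasurable).2 (hδ2 t)
  have hβL2 : ∀ t, MemLp (β t) 2 ℙ := fun t =>
    (memLp_two_iff_integrable_sq (hβm t).aestronglyMeasurable).2 (hβ2 t)
  have hXm : ∀ t, StronglyMeasurable[ℱ (t + 1)] (X t) := fun t =>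
    (((measurable_genHist_left le_rfl).sub (measurable_genHist_left t.le_succ)).add
      (measurable_genHist_right t.lt_succ_self)).stronglyMeasurable
  have hXsum : Summable fun t : ℕ => (∫ ω, X t ω ^ 2 ∂ℙ) / (t + 1) ^ 2 := by
    -- the `t = 0` term of `hsum` is a division by zero
    refine (hsum.mul_left 2).of_norm_bounded_eventually_nat ?_
    filter_upwards [eventually_ne_atTop 0] with t ht
    have hX0 : 0 ≤ ∫ ω, X t ω ^ 2 ∂ℙ := integral_nonneg fun ω => sq_nonneg _
    rw [Real.norm_of_nonneg (by positivity), mul_div_assoc']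
    exact div_le_div₀ (by positivity) (integral_add_sq_le (hδL2 t) (hβL2 t))
      (by positivity) (by gcongr; linarith)
  filter_upwards [ae_tendsto_sum_sub_condExp_div hXm (fun t => (hδL2 t).add (hβL2 t)) hXsum,
    ae_all_iff.2 hdrift] with ω hnoise hdriftω
  exact limsup_sum_range_div_le_zero (hΨpos · ω) (fun t => (le_sub_self_iff _).2 (hdriftω t)) hnoise

/-- Generalized drift-plus-penalty: if `Ψ ≥ 0`, the second moments of
`δ(t) = Ψ(t+1) - Ψ(t)` and of `β(t)` are finite with
`∑ₜ (E[δ(t)²] + E[β(t)²])/t² < ∞`, and `E[δ(t) + β(t) | H(t)] ≤ 0` a.s. for all `t`,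
then `limsup (1/t) ∑_{τ<t} β(τ) ≤ 0` with probability 1. -/
theorem generalized_drift_plus_penalty
    {Ω : Type*} [MeasureSpace Ω] [IsProbabilityMeasure (ℙ : Measure Ω)]
    (Ψ β : ℕ → Ω → ℝ)
    (hΨm : ∀ t, Measurable (Ψ t)) (hβm : ∀ t, Measurable (β t))
    (hΨpos : ∀ t ω, 0 ≤ Ψ t ω)
    (hδint : ∀ t, Integrable (fun ω => Ψ (t + 1) ω - Ψ t ω) ℙ)
    (hβint : ∀ t, Integrable (β t) ℙ)
    (hδ2 : ∀ t, Integrable (fun ω => (Ψ (t + 1) ω - Ψ t ω) ^ 2) ℙ)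
    (hβ2 : ∀ t, Integrable (fun ω => (β t ω) ^ 2) ℙ)
    (hsum : Summable (fun t : ℕ =>
      ((∫ ω, (Ψ (t + 1) ω - Ψ t ω) ^ 2 ∂(ℙ : Measure Ω)) +
        ∫ ω, (β t ω) ^ 2 ∂(ℙ : Measure Ω)) / (t : ℝ) ^ 2))
    (hdrift : ∀ t, ∀ᵐ ω ∂(ℙ : Measure Ω),
      ((ℙ : Measure Ω)[fun ω' => (Ψ (t + 1) ω' - Ψ t ω') + β t ω' | genHist Ψ β t]) ω ≤ 0) :
    ∀ᵐ ω ∂(ℙ : Measure Ω),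
      Filter.limsup
        (fun t : ℕ => (((∑ τ ∈ Finset.range t, β τ ω) / (t : ℝ) : ℝ) : EReal)) atTop
      ≤ (0 : EReal) :=
  generalized_drift_plus_penalty_general Ψ β hΨm hβm hΨpos hδ2 hβ2 hsum hdrift
end

section
/- Negative drift of the norm outside a ball: Let Q(t) ∈ ℝ^K be a discrete-time stochastic process, L(Q) = (1/2)∑_k w_k Q_k² with w_k > 0, and ‖Q‖ = sqrt(L(Q)). Suppose there exist constants B̃ > 0 and ε > 0 such that E[L(Q(t+1)) − L(Q(t)) | H(t)] ≤ B̃ − ε ∑_{k=1}^K |Q_k(t)| for all t and all histories. Then there exist constants c > 0 and a > 0 such that whenever ‖Q(t)‖ ≥ a, we have E[‖Q(t+1)‖ | Q(t)] ≤ ‖Q(t)‖ − c. In particular one can take c = ε√2/(4√(w_max)) and a = max{B̃/(2c), c}, where w_max = max_k w_k. -/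
open MeasureTheory ProbabilityTheory Filter Topology

/-- The quadratic Lyapunov function `L(q) = (1/2) ∑ₖ wₖ qₖ²`. -/
noncomputable def lyap {K : ℕ} (w : Fin K → ℝ) (q : Fin K → ℝ) : ℝ :=
  (1 / 2) * ∑ k, w k * q k ^ 2

/-- The history σ-algebra generated by `Q(0), ..., Q(t)`. -/
def qHist {Ω : Type*} [MeasurableSpace Ω] {K : ℕ} (Q : ℕ → Ω → Fin K → ℝ) (t : ℕ) :
    MeasurableSpace Ω :=
  ⨆ i ∈ Finset.range (t + 1), MeasurableSpace.comap (Q i) inferInstance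

/-- Negative drift of the norm outside a ball: if the conditional drift of
the quadratic Lyapunov function satisfies `Δ(H(t)) ≤ B̃ - ε ∑ₖ |Qₖ(t)|`, then there are
`c > 0` and `a > 0` such that whenever `‖Q(t)‖ ≥ a` we have
`E[‖Q(t+1)‖ | Q(t)] ≤ ‖Q(t)‖ - c`. -/
theorem negative_norm_drift_outside_ball
    {Ω : Type*} [MeasureSpace Ω] [IsProbabilityMeasure (ℙ : Measure Ω)]
    {K : ℕ} (w : Fin K → ℝ) (hw : ∀ k, 0 < w k)
    (Q : ℕ → Ω → Fin K → ℝ)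
    (hQm : ∀ t, Measurable (Q t))
    (hLint : ∀ t, Integrable (fun ω => lyap w (Q t ω)) ℙ)
    (Btil ε : ℝ) (hB : 0 < Btil) (hε : 0 < ε)
    (hdrift : ∀ t, ∀ᵐ ω ∂(ℙ : Measure Ω),
      ((ℙ : Measure Ω)[fun ω' => lyap w (Q (t + 1) ω') - lyap w (Q t ω') | qHist Q t]) ω
        ≤ Btil - ε * ∑ k, |Q t ω k|) :
    ∃ c > 0, ∃ a > 0, ∀ t, ∀ᵐ ω ∂(ℙ : Measure Ω),
      a ≤ Real.sqrt (lyap w (Q t ω)) →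
      ((ℙ : Measure Ω)[fun ω' => Real.sqrt (lyap w (Q (t + 1) ω')) |
          MeasurableSpace.comap (Q t) inferInstance]) ω
        ≤ Real.sqrt (lyap w (Q t ω)) - c := by
  classical
  have hlyap_nonneg : ∀ q : Fin K → ℝ, 0 ≤ lyap w q := by
    intro q
    apply mul_nonneg (by norm_num)
    exact Finset.sum_nonneg fun k _ => mul_nonneg (hw k).le (sq_nonneg _)
  rcases Nat.eq_zero_or_pos K with hK | hK
  · refine ⟨1, one_pos, 1, one_pos, fun t => ?_⟩
    filter_upwards with ω h
    exfalso
    subst hK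
    simp [lyap] at h
    linarith
  haveI : Nonempty (Fin K) := Fin.pos_iff_nonempty.mp hK
  set wmax : ℝ := Finset.univ.sup' Finset.univ_nonempty w with hwmax_def
  have hwmax : 0 < wmax := lt_of_lt_of_le (hw ⟨0, hK⟩) (Finset.le_sup' w (Finset.mem_univ _))
  set ε' : ℝ := ε * Real.sqrt (2 / wmax) with hε'_def
  have hε' : 0 < ε' := mul_pos hε (Real.sqrt_pos.mpr (by positivity))
  set c : ℝ := ε' / 4 with hc_def
  have hc : 0 < c := by positivity
  set a : ℝ := Btil / (2 * c) with ha_def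
  have ha : 0 < a := by positivity
  -- auxiliary deterministic facts
  have hcoord : ∀ (q : Fin K → ℝ) k, |q k| ≤ 1 + (2 / w k) * lyap w q := by
    intro q k
    have h1 : w k * q k ^ 2 ≤ ∑ j, w j * q j ^ 2 :=
      Finset.single_le_sum (fun j _ => mul_nonneg (hw j).le (sq_nonneg _)) (Finset.mem_univ k)
    have h2 : q k ^ 2 ≤ (2 / w k) * lyap w q := by
      rw [lyap, div_mul_eq_mul_div, le_div_iff₀ (hw k)]
      nlinarith [h1]
    nlinarith [sq_abs (q k), abs_nonneg (q k)]
  have hsqrt_le : ∀ y : ℝ, 0 ≤ y → Real.sqrt y ≤ 1 + y := by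
    intro y hy
    nlinarith [Real.sq_sqrt hy, Real.sqrt_nonneg y]
  have hkey : ∀ q : Fin K → ℝ, ε' * Real.sqrt (lyap w q) ≤ ε * ∑ k, |q k| := by
    intro q
    have h1 : lyap w q ≤ wmax / 2 * (∑ k, |q k|) ^ 2 := by
      have ha' : ∑ k, w k * q k ^ 2 ≤ wmax * ∑ k, q k ^ 2 := by
        rw [Finset.mul_sum]
        exact Finset.sum_le_sum fun k _ =>
          mul_le_mul_of_nonneg_right (Finset.le_sup' w (Finset.mem_univ k)) (sq_nonneg _)
      have hb' : ∑ k, q k ^ 2 ≤ (∑ k, |q k|) ^ 2 := by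
        have := Finset.sum_sq_le_sq_sum_of_nonneg
          (f := fun k => |q k|) (s := Finset.univ) (fun i _ => abs_nonneg (q i))
        simpa [sq_abs] using this
      rw [lyap]
      nlinarith [ha', hb', hwmax]
    have h3 : Real.sqrt (lyap w q) ≤ Real.sqrt (wmax / 2) * ∑ k, |q k| := by
      calc Real.sqrt (lyap w q) ≤ Real.sqrt (wmax / 2 * (∑ k, |q k|) ^ 2) := Real.sqrt_le_sqrt h1
        _ = Real.sqrt (wmax / 2) * ∑ k, |q k| := by
            rw [Real.sqrt_mul (by positivity),
              Real.sqrt_sq (Finset.sum_nonneg fun k _ => abs_nonneg (q k))]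
    calc ε' * Real.sqrt (lyap w q) ≤ ε' * (Real.sqrt (wmax / 2) * ∑ k, |q k|) :=
          mul_le_mul_of_nonneg_left h3 hε'.le
      _ = ε * (Real.sqrt (2 / wmax) * Real.sqrt (wmax / 2)) * ∑ k, |q k| := by
          rw [hε'_def]; ring
      _ = ε * ∑ k, |q k| := by
          rw [← Real.sqrt_mul (by positivity)]
          have h4 : 2 / wmax * (wmax / 2) = 1 := by field_simp
          rw [h4, Real.sqrt_one, mul_one]
  clear_value wmax ε' c a
  refine ⟨c, hc, a, ha, fun t => ?_⟩
  -- ambient measurability and integrability facts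
  have hlyap_cont : Continuous (lyap w) := by unfold lyap; fun_prop
  have hS_meas : Measurable fun q : Fin K → ℝ => ∑ k, |q k| :=
    Finset.measurable_sum _ fun k _ => (measurable_pi_apply k).abs
  have hsqrt_int : ∀ t', Integrable (fun ω => Real.sqrt (lyap w (Q t' ω))) ℙ := by
    intro t'
    refine Integrable.mono' ((integrable_const (1 : ℝ)).add (hLint t'))
      (((Real.continuous_sqrt.comp hlyap_cont).measurable.comp (hQm t')).aestronglyMeasurable)
      (ae_of_all _ fun ω => ?_)
    rw [Real.norm_eq_abs, abs_of_nonneg (Real.sqrt_nonneg _)]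
    exact hsqrt_le _ (hlyap_nonneg _)
  have hS_int : Integrable (fun ω => ∑ k, |Q t ω k|) ℙ := by
    refine integrable_finset_sum _ fun k _ => ?_
    refine Integrable.mono' ((integrable_const (1 : ℝ)).add ((hLint t).const_mul (2 / w k)))
      (((measurable_pi_apply k).comp (hQm t)).abs.aestronglyMeasurable)
      (ae_of_all _ fun ω => ?_)
    rw [Real.norm_eq_abs, abs_abs]
    exact hcoord (Q t ω) k
  have hxt_meas : Measurable fun q : Fin K → ℝ => max a (Real.sqrt (lyap w q)) :=
    measurable_const.max (Real.continuous_sqrt.comp hlyap_cont).measurable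
  have hxt_int : Integrable (fun ω => max a (Real.sqrt (lyap w (Q t ω)))) ℙ := by
    refine Integrable.mono' ((integrable_const a).add (hsqrt_int t))
      ((hxt_meas.comp (hQm t)).aestronglyMeasurable) (ae_of_all _ fun ω => ?_)
    rw [Real.norm_eq_abs, abs_of_nonneg (le_trans ha.le (le_max_left _ _))]
    exact max_le (le_add_of_nonneg_right (Real.sqrt_nonneg _)) (le_add_of_nonneg_left ha.le)
  have hu_meas : Measurable fun q : Fin K → ℝ => (2 * max a (Real.sqrt (lyap w q)))⁻¹ :=
    (hxt_meas.const_mul 2).inv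
  have hu_nonneg : ∀ ω, 0 ≤ (2 * max a (Real.sqrt (lyap w (Q t ω))))⁻¹ := by
    intro ω
    have h0 : (0:ℝ) < max a (Real.sqrt (lyap w (Q t ω))) := lt_of_lt_of_le ha (le_max_left _ _)
    exact inv_nonneg.mpr (by linarith)
  have hu_le : ∀ ω, (2 * max a (Real.sqrt (lyap w (Q t ω))))⁻¹ ≤ (2 * a)⁻¹ := by
    intro ω
    apply inv_anti₀ (by linarith [ha])
    have : a ≤ max a (Real.sqrt (lyap w (Q t ω))) := le_max_left _ _
    linarith
  have huL'_int : Integrable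
      (fun ω => (2 * max a (Real.sqrt (lyap w (Q t ω))))⁻¹ * lyap w (Q (t + 1) ω)) ℙ := by
    refine Integrable.mono' ((hLint (t + 1)).const_mul (2 * a)⁻¹)
      (((hu_meas.comp (hQm t)).mul (hlyap_cont.measurable.comp (hQm (t + 1)))).aestronglyMeasurable)
      (ae_of_all _ fun ω => ?_)
    rw [Real.norm_eq_abs, abs_of_nonneg (mul_nonneg (hu_nonneg ω) (hlyap_nonneg _))]
    exact mul_le_mul_of_nonneg_right (hu_le ω) (hlyap_nonneg _)
  -- set up σ-algebras
  have hm : (MeasurableSpace.comap (Q t) inferInstance) ≤ MeasureSpace.toMeasurableSpace := (hQm t).comap_le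
  have hH : qHist Q t ≤ MeasureSpace.toMeasurableSpace := by
    unfold qHist; exact iSup₂_le fun i _ => (hQm i).comap_le
  have hmH : (MeasurableSpace.comap (Q t) inferInstance) ≤ qHist Q t := by
    unfold qHist
    exact le_iSup₂ (f := fun i (_ : i ∈ Finset.range (t + 1)) =>
      MeasurableSpace.comap (Q i) inferInstance) t (Finset.self_mem_range_succ t)
  haveI : SigmaFinite (@Measure.trim Ω (MeasurableSpace.comap (Q t) inferInstance) _ ℙ hm) := by infer_instance
  haveI : SigmaFinite (@Measure.trim Ω (qHist Q t) _ ℙ hH) := by infer_instance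
  have hQtm' : Measurable[(MeasurableSpace.comap (Q t) inferInstance)] (Q t) := Measurable.of_comap_le le_rfl
  have hgm : ∀ g : (Fin K → ℝ) → ℝ, Measurable g →
      StronglyMeasurable[(MeasurableSpace.comap (Q t) inferInstance)] fun ω => g (Q t ω) := fun g hg =>
    (hg.comp hQtm').stronglyMeasurable
  -- Step A: drift bound for the conditional expectation with respect to the history
  have hA : ℙ[fun ω => lyap w (Q (t + 1) ω)|qHist Q t]
      ≤ᵐ[ℙ] fun ω => lyap w (Q t ω) + (Btil - ε * ∑ k, |Q t ω k|) := by
    have e0 : (((fun ω => lyap w (Q (t + 1) ω)) - fun ω => lyap w (Q t ω))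
        + fun ω => lyap w (Q t ω)) = fun ω => lyap w (Q (t + 1) ω) := by funext ω; simp
    have esub : ((fun ω => lyap w (Q (t + 1) ω)) - fun ω => lyap w (Q t ω))
        = fun ω' => lyap w (Q (t + 1) ω') - lyap w (Q t ω') := rfl
    have e1 := condExp_add (μ := ℙ) (m := qHist Q t)
      ((hLint (t + 1)).sub (hLint t)) (hLint t)
    rw [e0, esub] at e1
    have e2 : ℙ[fun ω => lyap w (Q t ω)|qHist Q t] = fun ω => lyap w (Q t ω) :=
      condExp_of_stronglyMeasurable hH ((hgm _ hlyap_cont.measurable).mono hmH) (hLint t)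
    filter_upwards [e1, hdrift t] with ω h1 h2
    have e2' : (ℙ[fun ω => lyap w (Q t ω)|qHist Q t]) ω = lyap w (Q t ω) := by rw [e2]
    rw [h1, Pi.add_apply, e2']
    linarith
  -- Step B: via the tower property, the same bound for the conditional expectation w.r.t. (MeasurableSpace.comap (Q t) inferInstance)
  have hRHS_int : Integrable (fun ω => lyap w (Q t ω) + (Btil - ε * ∑ k, |Q t ω k|)) ℙ :=
    (hLint t).add ((integrable_const Btil).sub (hS_int.const_mul ε))
  have hRHS_sm : StronglyMeasurable[(MeasurableSpace.comap (Q t) inferInstance)]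
      fun ω => lyap w (Q t ω) + (Btil - ε * ∑ k, |Q t ω k|) :=
    hgm _ (hlyap_cont.measurable.add (measurable_const.sub (hS_meas.const_mul ε)))
  have hB2 : ℙ[fun ω => lyap w (Q (t + 1) ω)|(MeasurableSpace.comap (Q t) inferInstance)]
      ≤ᵐ[ℙ] fun ω => lyap w (Q t ω) + (Btil - ε * ∑ k, |Q t ω k|) := by
    have tower : ℙ[fun ω => lyap w (Q (t + 1) ω)|(MeasurableSpace.comap (Q t) inferInstance)]
        =ᵐ[ℙ] ℙ[ℙ[fun ω => lyap w (Q (t + 1) ω)|qHist Q t]|(MeasurableSpace.comap (Q t) inferInstance)] :=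
      (condExp_condExp_of_le hmH hH).symm
    have mono := condExp_mono (m := MeasurableSpace.comap (Q t) inferInstance) integrable_condExp hRHS_int hA
    have pull : ℙ[(fun ω => lyap w (Q t ω) + (Btil - ε * ∑ k, |Q t ω k|))|(MeasurableSpace.comap (Q t) inferInstance)]
        = fun ω => lyap w (Q t ω) + (Btil - ε * ∑ k, |Q t ω k|) :=
      condExp_of_stronglyMeasurable hm hRHS_sm hRHS_int
    rw [pull] at mono
    filter_upwards [tower, mono] with ω h1 h2
    rw [h1]; exact h2
  -- Step C: pointwise AM-GM bound on the square root
  have hpt : ∀ ω, Real.sqrt (lyap w (Q (t + 1) ω))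
      ≤ (2 * max a (Real.sqrt (lyap w (Q t ω))))⁻¹ * lyap w (Q (t + 1) ω)
        + max a (Real.sqrt (lyap w (Q t ω))) / 2 := by
    intro ω
    set y := lyap w (Q (t + 1) ω) with hy_def
    set z := max a (Real.sqrt (lyap w (Q t ω))) with hz_def
    have hz : 0 < z := lt_of_lt_of_le ha (le_max_left _ _)
    have hz0 : z ≠ 0 := ne_of_gt hz
    have hy : 0 ≤ y := hlyap_nonneg _
    have h3 : Real.sqrt y ≤ (y + z ^ 2) / (2 * z) := by
      rw [le_div_iff₀ (by linarith)]
      nlinarith [Real.sq_sqrt hy, sq_nonneg (Real.sqrt y - z)]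
    have h4 : (y + z ^ 2) / (2 * z) = (2 * z)⁻¹ * y + z / 2 := by
      field_simp
    linarith [h3, h4.le, h4.ge]
  -- Step D: conditional expectation estimates
  have hD1 : ℙ[fun ω => Real.sqrt (lyap w (Q (t + 1) ω))|(MeasurableSpace.comap (Q t) inferInstance)]
      ≤ᵐ[ℙ] ℙ[fun ω => (2 * max a (Real.sqrt (lyap w (Q t ω))))⁻¹ * lyap w (Q (t + 1) ω)
        + max a (Real.sqrt (lyap w (Q t ω))) / 2|(MeasurableSpace.comap (Q t) inferInstance)] :=
    condExp_mono (hsqrt_int (t + 1)) (huL'_int.add (hxt_int.div_const 2)) (ae_of_all _ hpt)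
  have hD2 := condExp_add (μ := ℙ) (m := MeasurableSpace.comap (Q t) inferInstance) huL'_int (hxt_int.div_const 2)
  have hD3 : ℙ[fun ω => (2 * max a (Real.sqrt (lyap w (Q t ω))))⁻¹ * lyap w (Q (t + 1) ω)|(MeasurableSpace.comap (Q t) inferInstance)]
      =ᵐ[ℙ] (fun ω => (2 * max a (Real.sqrt (lyap w (Q t ω))))⁻¹)
        * ℙ[fun ω => lyap w (Q (t + 1) ω)|(MeasurableSpace.comap (Q t) inferInstance)] :=
    condExp_mul_of_stronglyMeasurable_left (hgm _ hu_meas) huL'_int (hLint (t + 1))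
  have hD4 : ℙ[fun ω => max a (Real.sqrt (lyap w (Q t ω))) / 2|(MeasurableSpace.comap (Q t) inferInstance)]
      = fun ω => max a (Real.sqrt (lyap w (Q t ω))) / 2 :=
    condExp_of_stronglyMeasurable hm (hgm _ (hxt_meas.div_const 2)) (hxt_int.div_const 2)
  -- final combination
  filter_upwards [hD1, hD2, hD3, hB2] with ω h1 h2 h3 hb hx_ge
  have hxpos : (0:ℝ) < Real.sqrt (lyap w (Q t ω)) := lt_of_lt_of_le ha hx_ge
  have hzx : max a (Real.sqrt (lyap w (Q t ω))) = Real.sqrt (lyap w (Q t ω)) :=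
    max_eq_right hx_ge
  have step : (ℙ[fun ω => Real.sqrt (lyap w (Q (t + 1) ω))|MeasurableSpace.comap (Q t) inferInstance]) ω ≤ (2 * max a (Real.sqrt (lyap w (Q t ω))))⁻¹ * (ℙ[fun ω => lyap w (Q (t + 1) ω)|MeasurableSpace.comap (Q t) inferInstance]) ω + max a (Real.sqrt (lyap w (Q t ω))) / 2 := by
    calc (ℙ[fun ω => Real.sqrt (lyap w (Q (t + 1) ω))|MeasurableSpace.comap (Q t) inferInstance]) ω
        ≤ (ℙ[fun ω => (2 * max a (Real.sqrt (lyap w (Q t ω))))⁻¹ * lyap w (Q (t + 1) ω) + max a (Real.sqrt (lyap w (Q t ω))) / 2|MeasurableSpace.comap (Q t) inferInstance]) ω := h1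
      _ = (ℙ[fun ω => (2 * max a (Real.sqrt (lyap w (Q t ω))))⁻¹ * lyap w (Q (t + 1) ω)|MeasurableSpace.comap (Q t) inferInstance]) ω + (ℙ[fun ω => max a (Real.sqrt (lyap w (Q t ω))) / 2|MeasurableSpace.comap (Q t) inferInstance]) ω := h2
      _ = (2 * max a (Real.sqrt (lyap w (Q t ω))))⁻¹ * (ℙ[fun ω => lyap w (Q (t + 1) ω)|MeasurableSpace.comap (Q t) inferInstance]) ω + (ℙ[fun ω => max a (Real.sqrt (lyap w (Q t ω))) / 2|MeasurableSpace.comap (Q t) inferInstance]) ω := by rw [h3]; rfl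
      _ = (2 * max a (Real.sqrt (lyap w (Q t ω))))⁻¹ * (ℙ[fun ω => lyap w (Q (t + 1) ω)|MeasurableSpace.comap (Q t) inferInstance]) ω + max a (Real.sqrt (lyap w (Q t ω))) / 2 := by rw [hD4]
  rw [hzx] at step
  have hL_eq : lyap w (Q t ω) = Real.sqrt (lyap w (Q t ω)) ^ 2 :=
    (Real.sq_sqrt (hlyap_nonneg _)).symm
  have hεS : ε' * Real.sqrt (lyap w (Q t ω)) ≤ ε * ∑ k, |Q t ω k| := hkey (Q t ω)
  set x := Real.sqrt (lyap w (Q t ω)) with hx_def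
  clear_value x
  have step2 : (2 * x)⁻¹ * (ℙ[fun ω => lyap w (Q (t + 1) ω)|MeasurableSpace.comap (Q t) inferInstance]) ω ≤ (2 * x)⁻¹ * (x ^ 2 + (Btil - ε * ∑ k, |Q t ω k|)) := by
    have h0 : (0:ℝ) ≤ (2 * x)⁻¹ := inv_nonneg.mpr (by linarith only [hxpos])
    exact mul_le_mul_of_nonneg_left (by linarith only [hb, hL_eq]) h0
  have h2cx : Btil ≤ x * (2 * c) := by
    have hx_ge2 : Btil / (2 * c) ≤ x := by rw [← ha_def]; exact hx_ge
    exact (div_le_iff₀ (by linarith only [hc])).mp hx_ge2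
  have harith : (2 * x)⁻¹ * (x ^ 2 + (Btil - ε * ∑ k, |Q t ω k|)) + x / 2 ≤ x - c := by
    have step3 : (2 * x)⁻¹ * (x ^ 2 + (Btil - ε * ∑ k, |Q t ω k|))
        ≤ (2 * x)⁻¹ * (x ^ 2 + (Btil - ε' * x)) :=
      mul_le_mul_of_nonneg_left (by linarith only [hεS]) (inv_nonneg.mpr (by linarith only [hxpos]))
    have hε'c : ε' = 4 * c := by rw [hc_def]; ring
    have step4 : (2 * x)⁻¹ * (x ^ 2 + (Btil - ε' * x)) ≤ x / 2 - c := by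
      rw [inv_mul_le_iff₀ (by linarith only [hxpos] : (0:ℝ) < 2 * x), hε'c]
      nlinarith only [h2cx, hxpos, hc]
    linarith only [step3, step4]
  linarith only [step, step2, harith]
end

section
/- Bounded time-average third moment under drift: Under the hypotheses that E[(Q_k(t+1) − Q_k(t))⁴ | Q(t)] ≤ D for all t, k and some finite D > 0, that E[‖Q(0)‖⁴] < ∞, and that the drift condition E[L(Q(t+1)) − L(Q(t)) | H(t)] ≤ B̃ − ε∑_k |Q_k(t)| holds with ε > 0, there is a finite constant b > 0 such that (1/M) ∑_{t=0}^{M−1} E[‖Q(t)‖³] ≤ b for all positive integers M. -/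
/-!
The potential is `E[L(Q(t))²]`. With `Δ = L(Q(t+1)) - L(Q(t))` one has
`L(Q(t+1))² - L(Q(t))² = 2 L(Q(t)) Δ + Δ²`. Pulling the `H(t)`-measurable factor `L(Q(t))` out of
the conditional expectation, the drift condition and `√L ≤ κ ∑ₖ |Qₖ|` give
`E[L Δ] ≤ B̃ E[L] - c E[L^{3/2}]`, while the fourth-moment bound on the increments gives
`E[Δ²] = O(E[L] + 1)`. The terms linear in `E[L]` are absorbed by `a x² ≤ b x³ + a³/b²`, so
`E[L(Q(t+1))²] - E[L(Q(t))²] ≤ C - c E[‖Q(t)‖³]`, and telescoping over `t < M` bounds the time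
average. Integrability of `L(Q(t))²` is propagated along the same induction.
-/

open MeasureTheory ProbabilityTheory Filter Topology

theorem mul_sq_le_mul_pow_three_add {a b s : ℝ} (ha : 0 ≤ a) (hb : 0 < b) (hs : 0 ≤ s) :
    a * s ^ 2 ≤ b * s ^ 3 + a ^ 3 / b ^ 2 := by
  rcases le_total a (b * s) with h | h
  · have : 0 ≤ a ^ 3 / b ^ 2 := by positivity
    nlinarith [mul_le_mul_of_nonneg_left h (sq_nonneg s)]
  · have hsab : s ≤ a / b := by rw [le_div_iff₀ hb]; linarith
    calc a * s ^ 2 ≤ a * (a / b) ^ 2 := by gcongr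
      _ = a ^ 3 / b ^ 2 := by field_simp
      _ ≤ b * s ^ 3 + a ^ 3 / b ^ 2 := le_add_of_nonneg_left (by positivity)

theorem average_le_of_sub_le {a x : ℕ → ℝ} {c C : ℝ} (hc : 0 < c) (ha : ∀ t, 0 ≤ a t)
    (hstep : ∀ t, a (t + 1) - a t ≤ C - c * x t) {M : ℕ} (hM : 0 < M) :
    1 / (M : ℝ) * ∑ t ∈ Finset.range M, x t ≤ (a 0 + C) / c := by
  have htel : ∑ t ∈ Finset.range M, (a (t + 1) - a t) ≤ ∑ t ∈ Finset.range M, (C - c * x t) :=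
    Finset.sum_le_sum fun t _ => hstep t
  rw [Finset.sum_range_sub, Finset.sum_sub_distrib, Finset.sum_const, Finset.card_range,
    nsmul_eq_mul, ← Finset.mul_sum] at htel
  have hM1 : (1 : ℝ) ≤ M := by exact_mod_cast hM
  rw [div_mul_eq_mul_div, one_mul, div_le_div_iff₀ (by positivity) hc]
  nlinarith [ha 0, ha M]

section Lyapunov

variable {K : ℕ} {w : Fin K → ℝ}

@[fun_prop]
theorem continuous_lyap : Continuous (lyap w) := by
  unfold lyap
  fun_prop

theorem lyap_nonneg (hw : ∀ k, 0 ≤ w k) (q : Fin K → ℝ) : 0 ≤ lyap w q :=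
  mul_nonneg (by norm_num) (Finset.sum_nonneg fun k _ => mul_nonneg (hw k) (sq_nonneg _))

theorem lyap_add (q d : Fin K → ℝ) :
    lyap w (q + d) = lyap w q + (∑ k, w k * q k * d k + lyap w d) := by
  simp only [lyap, Pi.add_apply, Finset.mul_sum, ← Finset.sum_add_distrib]
  exact Finset.sum_congr rfl fun k _ => by ring

theorem sq_sum_mul_le_four_mul_lyap_mul_lyap (hw : ∀ k, 0 ≤ w k) (q d : Fin K → ℝ) :
    (∑ k, w k * q k * d k) ^ 2 ≤ 4 * lyap w q * lyap w d := by
  have hcs := Finset.sum_sq_le_sum_mul_sum_of_sq_le_mul Finset.univ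
    (r := fun k => w k * q k * d k) (f := fun k => w k * q k ^ 2) (g := fun k => w k * d k ^ 2)
    (fun k _ => mul_nonneg (hw k) (sq_nonneg _)) (fun k _ => mul_nonneg (hw k) (sq_nonneg _))
    (fun k _ => le_of_eq (by ring))
  calc _ ≤ _ := hcs
    _ = 4 * lyap w q * lyap w d := by simp only [lyap]; ring

theorem lyap_sq_le (hw : ∀ k, 0 ≤ w k) (d : Fin K → ℝ) :
    lyap w d ^ 2 ≤ (∑ k, w k) / 4 * ∑ k, w k * d k ^ 4 := by
  have hcs := Finset.sum_sq_le_sum_mul_sum_of_sq_le_mul Finset.univ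
    (r := fun k => w k * d k ^ 2) (f := w) (g := fun k => w k * d k ^ 4)
    (fun k _ => hw k) (fun k _ => mul_nonneg (hw k) (by positivity))
    (fun k _ => le_of_eq (by ring))
  calc lyap w d ^ 2 = (∑ k, w k * d k ^ 2) ^ 2 / 4 := by simp only [lyap]; ring
    _ ≤ (∑ k, w k) * (∑ k, w k * d k ^ 4) / 4 := by gcongr
    _ = _ := by ring

theorem sq_lyap_add_sub_le (hw : ∀ k, 0 ≤ w k) (q d : Fin K → ℝ) :
    (lyap w (q + d) - lyap w q) ^ 2 ≤ 8 * lyap w q * lyap w d + 2 * lyap w d ^ 2 := by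
  rw [lyap_add, add_sub_cancel_left]
  nlinarith [sq_sum_mul_le_four_mul_lyap_mul_lyap hw q d,
    sq_nonneg (∑ k, w k * q k * d k - lyap w d)]

-- The `+ 1` keeps the constant positive when `K = 0`.
theorem sqrt_lyap_le_mul_sum_abs (hw : ∀ k, 0 ≤ w k) (q : Fin K → ℝ) :
    √(lyap w q) ≤ √(∑ k, w k + 1) * ∑ k, |q k| := by
  have hsq : ∀ k, q k ^ 2 ≤ (∑ j, |q j|) ^ 2 := fun k => by
    rw [← sq_abs]
    gcongr
    exact Finset.single_le_sum (f := fun j => |q j|) (fun j _ => abs_nonneg _) (Finset.mem_univ k)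
  have hW : 0 ≤ ∑ k, w k := Finset.sum_nonneg fun k _ => hw k
  have hle : lyap w q ≤ (∑ k, w k + 1) * (∑ k, |q k|) ^ 2 := by
    calc lyap w q ≤ 1 / 2 * ∑ k, w k * (∑ j, |q j|) ^ 2 := by
          unfold lyap
          gcongr 1 / 2 * ?_
          exact Finset.sum_le_sum fun k _ => mul_le_mul_of_nonneg_left (hsq k) (hw k)
      _ ≤ (∑ k, w k + 1) * (∑ k, |q k|) ^ 2 := by
          rw [← Finset.sum_mul]; nlinarith [sq_nonneg (∑ k, |q k|)]
  calc √(lyap w q) ≤ √((∑ k, w k + 1) * (∑ k, |q k|) ^ 2) := Real.sqrt_le_sqrt hle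
    _ = _ := by
      rw [Real.sqrt_mul (by positivity), Real.sqrt_sq (Finset.sum_nonneg fun k _ => abs_nonneg _)]

end Lyapunov

section Moments

variable {Ω : Type*} {m m0 : MeasurableSpace Ω} {μ : Measure Ω}

theorem integrable_mul_of_integrable_sq {f g : Ω → ℝ} (hf : AEStronglyMeasurable f μ)
    (hg : AEStronglyMeasurable g μ) (hf2 : Integrable (fun ω => f ω ^ 2) μ)
    (hg2 : Integrable (fun ω => g ω ^ 2) μ) : Integrable (fun ω => f ω * g ω) μ :=
  ((memLp_two_iff_integrable_sq hf).2 hf2).integrable_mul ((memLp_two_iff_integrable_sq hg).2 hg2)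

theorem integrable_sq_of_integrable_pow_four [IsFiniteMeasure μ] {g : Ω → ℝ}
    (hg : AEStronglyMeasurable g μ) (hg4 : Integrable (fun ω => g ω ^ 4) μ) :
    Integrable (fun ω => g ω ^ 2) μ := by
  simpa using integrable_mul_of_integrable_sq (f := fun ω => g ω ^ 2) (g := fun _ => (1 : ℝ))
    (hg.pow 2) aestronglyMeasurable_const (by simpa only [← pow_mul] using hg4)
    (by simp)

theorem integrable_sqrt_pow_three {X : Ω → ℝ} (hX0 : 0 ≤ᵐ[μ] X) (hX : Integrable X μ)
    (hX2 : Integrable (fun ω => X ω ^ 2) μ) : Integrable (fun ω => √(X ω) ^ 3) μ := by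
  refine (integrable_mul_of_integrable_sq hX.1
    (Real.continuous_sqrt.comp_aestronglyMeasurable hX.1) hX2 ?_).congr ?_
  · exact hX.congr (by filter_upwards [hX0] with ω h using (Real.sq_sqrt h).symm)
  · filter_upwards [hX0] with ω h
    rw [pow_succ, Real.sq_sqrt h]

theorem mul_integral_le_integral_sqrt_pow_three_add [IsProbabilityMeasure μ] {X : Ω → ℝ}
    (hX0 : 0 ≤ᵐ[μ] X) (hX : Integrable X μ) (hX3 : Integrable (fun ω => √(X ω) ^ 3) μ)
    {a b : ℝ} (ha : 0 ≤ a) (hb : 0 < b) :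
    a * ∫ ω, X ω ∂μ ≤ b * ∫ ω, √(X ω) ^ 3 ∂μ + a ^ 3 / b ^ 2 := by
  rw [← integral_const_mul, ← integral_const_mul]
  calc ∫ ω, a * X ω ∂μ ≤ ∫ ω, (b * √(X ω) ^ 3 + a ^ 3 / b ^ 2) ∂μ := by
        refine integral_mono_ae (hX.const_mul a) ((hX3.const_mul b).add (integrable_const _)) ?_
        filter_upwards [hX0] with ω h
        simpa [Real.sq_sqrt h] using mul_sq_le_mul_pow_three_add ha hb (Real.sqrt_nonneg (X ω))
    _ = ∫ ω, b * √(X ω) ^ 3 ∂μ + a ^ 3 / b ^ 2 := by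
        rw [integral_add (hX3.const_mul b) (integrable_const _), integral_const]
        simp

theorem integral_mul_le_integral_mul_of_condExp_le (hm : m ≤ m0) [SigmaFinite (μ.trim hm)]
    {f g φ : Ω → ℝ} (hf : AEStronglyMeasurable[m] f μ) (hf0 : 0 ≤ᵐ[μ] f) (hg : Integrable g μ)
    (hfg : Integrable (fun ω => f ω * g ω) μ) (hfφ : Integrable (fun ω => f ω * φ ω) μ)
    (hgφ : μ[g|m] ≤ᵐ[μ] φ) :
    ∫ ω, f ω * g ω ∂μ ≤ ∫ ω, f ω * φ ω ∂μ := by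
  have hpull : μ[f * g|m] =ᵐ[μ] f * μ[g|m] := condExp_mul_of_aestronglyMeasurable_left hf hfg hg
  calc ∫ ω, f ω * g ω ∂μ = ∫ ω, (μ[f * g|m]) ω ∂μ := (integral_condExp hm).symm
    _ = ∫ ω, f ω * (μ[g|m]) ω ∂μ := integral_congr_ae hpull
    _ ≤ ∫ ω, f ω * φ ω ∂μ := by
      refine integral_mono_ae (integrable_condExp.congr hpull) hfφ ?_
      filter_upwards [hf0, hgφ] with ω hf0 hgφ
      exact mul_le_mul_of_nonneg_left hgφ hf0

theorem integral_le_of_condExp_le_const [IsProbabilityMeasure μ] (hm : m ≤ m0) {g : Ω → ℝ}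
    {D : ℝ} (hD : μ[g|m] ≤ᵐ[μ] fun _ => D) : ∫ ω, g ω ∂μ ≤ D := by
  rw [← integral_condExp hm]
  simpa using integral_mono_ae integrable_condExp (integrable_const D) hD

theorem condExp_sq_le_of_condExp_pow_four_le [IsFiniteMeasure μ] (hm : m ≤ m0) {g : Ω → ℝ}
    {D : ℝ} (hg2 : Integrable (fun ω => g ω ^ 2) μ) (hg4 : Integrable (fun ω => g ω ^ 4) μ)
    (hD : μ[fun ω => g ω ^ 4|m] ≤ᵐ[μ] fun _ => D) :
    μ[fun ω => g ω ^ 2|m] ≤ᵐ[μ] fun _ => (1 + D) / 2 := by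
  have hbound : (fun ω => g ω ^ 2) ≤ᵐ[μ] (fun _ => 1 / 2) + (1 / 2 : ℝ) • fun ω => g ω ^ 4 :=
    ae_of_all _ fun ω => by
      simp only [Pi.add_apply, Pi.smul_apply, smul_eq_mul]
      nlinarith [sq_nonneg (g ω ^ 2 - 1)]
  have hlin := condExp_add (integrable_const (1 / 2 : ℝ)) (hg4.smul (1 / 2 : ℝ)) m
  filter_upwards [condExp_mono hg2 ((integrable_const _).add (hg4.smul _)) hbound, hlin,
    condExp_smul (1 / 2 : ℝ) (fun ω => g ω ^ 4) m, hD] with ω hmono hadd hsmul hD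
  rw [hadd, Pi.add_apply, hsmul, condExp_const hm, Pi.smul_apply, smul_eq_mul] at hmono
  linarith

end Moments

section OneStep

variable {Ω : Type*} {mΩ : MeasurableSpace Ω} {μ : Measure Ω}
  {K : ℕ} {w : Fin K → ℝ} {q q' : Ω → Fin K → ℝ} {D : ℝ}

theorem integral_lyap_sub_sq_le (hw : ∀ k, 0 ≤ w k) (hq : Measurable q) (hq' : Measurable q')
    (hd4int : ∀ k, Integrable (fun ω => (q' ω k - q ω k) ^ 4) μ)
    (hd4 : ∀ k, ∫ ω, (q' ω k - q ω k) ^ 4 ∂μ ≤ D) :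
    Integrable (fun ω => lyap w (q' ω - q ω) ^ 2) μ ∧
      ∫ ω, lyap w (q' ω - q ω) ^ 2 ∂μ ≤ (∑ k, w k) ^ 2 * D / 4 := by
  have hW : 0 ≤ ∑ k, w k := Finset.sum_nonneg fun k _ => hw k
  have hsummand : ∀ k, Integrable (fun ω => w k * (q' ω k - q ω k) ^ 4) μ :=
    fun k => (hd4int k).const_mul (w k)
  have hbound : Integrable (fun ω => (∑ k, w k) / 4 * ∑ k, w k * (q' ω k - q ω k) ^ 4) μ :=
    (integrable_finsetSum _ fun k _ => hsummand k).const_mul _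
  have hpt : ∀ ω, lyap w (q' ω - q ω) ^ 2 ≤ (∑ k, w k) / 4 * ∑ k, w k * (q' ω k - q ω k) ^ 4 :=
    fun ω => lyap_sq_le hw _
  have hint : Integrable (fun ω => lyap w (q' ω - q ω) ^ 2) μ :=
    hbound.mono' (by fun_prop) (ae_of_all _ fun ω => by
      rw [Real.norm_of_nonneg (sq_nonneg _)]; exact hpt ω)
  refine ⟨hint, (integral_mono hint hbound hpt).trans ?_⟩
  rw [integral_const_mul, integral_finsetSum _ fun k _ => hsummand k]
  calc (∑ k, w k) / 4 * ∑ k, ∫ ω, w k * (q' ω k - q ω k) ^ 4 ∂μ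
      ≤ (∑ k, w k) / 4 * ∑ k, w k * D := by
        gcongr with k
        rw [integral_const_mul]
        exact mul_le_mul_of_nonneg_left (hd4 k) (hw k)
    _ = (∑ k, w k) ^ 2 * D / 4 := by rw [← Finset.sum_mul]; ring

theorem integral_lyap_mul_lyap_sub_le [IsFiniteMeasure μ] (hw : ∀ k, 0 ≤ w k) (hq : Measurable q)
    (hq' : Measurable q') (hL : Integrable (fun ω => lyap w (q ω)) μ)
    (hL2 : Integrable (fun ω => lyap w (q ω) ^ 2) μ)
    (hd4int : ∀ k, Integrable (fun ω => (q' ω k - q ω k) ^ 4) μ)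
    (hd4 : ∀ k, μ[fun ω => (q' ω k - q ω k) ^ 4 | MeasurableSpace.comap q inferInstance]
      ≤ᵐ[μ] fun _ => D) :
    ∫ ω, lyap w (q ω) * lyap w (q' ω - q ω) ∂μ ≤
      (∑ k, w k) * (1 + D) / 4 * ∫ ω, lyap w (q ω) ∂μ := by
  have hm : MeasurableSpace.comap q inferInstance ≤ mΩ := hq.comap_le
  have hLm : Measurable[MeasurableSpace.comap q inferInstance] fun ω => lyap w (q ω) :=
    continuous_lyap.measurable.comp (comap_measurable q)
  have hd : ∀ k, AEStronglyMeasurable (fun ω => q' ω k - q ω k) μ := fun k => by fun_prop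
  have hd2 : ∀ k, Integrable (fun ω => (q' ω k - q ω k) ^ 2) μ :=
    fun k => integrable_sq_of_integrable_pow_four (hd k) (hd4int k)
  have hLd2 : ∀ k, Integrable (fun ω => lyap w (q ω) * (q' ω k - q ω k) ^ 2) μ := fun k =>
    integrable_mul_of_integrable_sq (by fun_prop) ((hd k).pow 2) hL2
      (by simpa only [← pow_mul] using hd4int k)
  have hcoord : ∀ k, ∫ ω, lyap w (q ω) * (q' ω k - q ω k) ^ 2 ∂μ ≤
      ∫ ω, lyap w (q ω) * ((1 + D) / 2) ∂μ := fun k =>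
    integral_mul_le_integral_mul_of_condExp_le hm hLm.aestronglyMeasurable
      (ae_of_all _ fun ω => lyap_nonneg hw _) (hd2 k) (hLd2 k) (hL.mul_const _)
      (condExp_sq_le_of_condExp_pow_four_le hm (hd2 k) (hd4int k) (hd4 k))
  have hexpand : ∀ ω, lyap w (q ω) * lyap w (q' ω - q ω) =
      ∑ k, w k / 2 * (lyap w (q ω) * (q' ω k - q ω k) ^ 2) := fun ω => by
    simp only [lyap, Pi.sub_apply, Finset.mul_sum]
    exact Finset.sum_congr rfl fun k _ => by ring
  simp_rw [hexpand]
  rw [integral_finsetSum _ fun k _ => (hLd2 k).const_mul _]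
  calc ∑ k, ∫ ω, w k / 2 * (lyap w (q ω) * (q' ω k - q ω k) ^ 2) ∂μ
      ≤ ∑ k, w k / 2 * ∫ ω, lyap w (q ω) * ((1 + D) / 2) ∂μ := by
        gcongr with k
        rw [integral_const_mul]
        exact mul_le_mul_of_nonneg_left (hcoord k) (by linarith [hw k])
    _ = (∑ k, w k) * (1 + D) / 4 * ∫ ω, lyap w (q ω) ∂μ := by
        rw [integral_mul_const, ← Finset.sum_mul, ← Finset.sum_div]
        ring

theorem integral_sq_lyap_sub_le [IsProbabilityMeasure μ] (hw : ∀ k, 0 ≤ w k) (hq : Measurable q)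
    (hq' : Measurable q') (hL : Integrable (fun ω => lyap w (q ω)) μ)
    (hL2 : Integrable (fun ω => lyap w (q ω) ^ 2) μ)
    (hd4int : ∀ k, Integrable (fun ω => (q' ω k - q ω k) ^ 4) μ)
    (hd4 : ∀ k, μ[fun ω => (q' ω k - q ω k) ^ 4 | MeasurableSpace.comap q inferInstance]
      ≤ᵐ[μ] fun _ => D) :
    Integrable (fun ω => (lyap w (q' ω) - lyap w (q ω)) ^ 2) μ ∧
      ∫ ω, (lyap w (q' ω) - lyap w (q ω)) ^ 2 ∂μ ≤
        2 * (∑ k, w k) * (1 + D) * ∫ ω, lyap w (q ω) ∂μ + (∑ k, w k) ^ 2 * D / 2 := by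
  obtain ⟨hR2, hR2_le⟩ := integral_lyap_sub_sq_le hw hq hq' hd4int
    fun k => integral_le_of_condExp_le_const hq.comap_le (hd4 k)
  have hLR : Integrable (fun ω => lyap w (q ω) * lyap w (q' ω - q ω)) μ :=
    integrable_mul_of_integrable_sq (by fun_prop) (by fun_prop) hL2 hR2
  have hLR_le := integral_lyap_mul_lyap_sub_le hw hq hq' hL hL2 hd4int hd4
  have hpt : ∀ ω, (lyap w (q' ω) - lyap w (q ω)) ^ 2 ≤
      8 * (lyap w (q ω) * lyap w (q' ω - q ω)) + 2 * lyap w (q' ω - q ω) ^ 2 := fun ω => by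
    have h := sq_lyap_add_sub_le hw (q ω) (q' ω - q ω)
    rw [add_sub_cancel] at h
    linarith
  have hbound : Integrable (fun ω =>
      8 * (lyap w (q ω) * lyap w (q' ω - q ω)) + 2 * lyap w (q' ω - q ω) ^ 2) μ :=
    (hLR.const_mul 8).add (hR2.const_mul 2)
  have hint : Integrable (fun ω => (lyap w (q' ω) - lyap w (q ω)) ^ 2) μ :=
    hbound.mono' (by fun_prop) (ae_of_all _ fun ω => by
      rw [Real.norm_of_nonneg (sq_nonneg _)]; exact hpt ω)
  refine ⟨hint, (integral_mono hint hbound hpt).trans ?_⟩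
  rw [integral_add (hLR.const_mul 8) (hR2.const_mul 2), integral_const_mul, integral_const_mul]
  linarith

theorem integral_lyap_mul_sub_le_of_drift [IsFiniteMeasure μ] (hw : ∀ k, 0 ≤ w k)
    (hL : Integrable (fun ω => lyap w (q ω)) μ)
    (hL2 : Integrable (fun ω => lyap w (q ω) ^ 2) μ) (hL' : Integrable (fun ω => lyap w (q' ω)) μ)
    (hLΔ : Integrable (fun ω => lyap w (q ω) * (lyap w (q' ω) - lyap w (q ω))) μ)
    {B ε : ℝ} (hε : 0 ≤ ε) {𝓗 : MeasurableSpace Ω} (h𝓗 : 𝓗 ≤ mΩ) (hq𝓗 : Measurable[𝓗] q)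
    (hdrift : μ[fun ω => lyap w (q' ω) - lyap w (q ω) | 𝓗]
      ≤ᵐ[μ] fun ω => B - ε * ∑ k, |q ω k|) :
    ∫ ω, lyap w (q ω) * (lyap w (q' ω) - lyap w (q ω)) ∂μ ≤
      B * ∫ ω, lyap w (q ω) ∂μ - ε / √(∑ k, w k + 1) * ∫ ω, √(lyap w (q ω)) ^ 3 ∂μ := by
  set c := ε / √(∑ k, w k + 1)
  have hW : 0 < √(∑ k, w k + 1) :=
    Real.sqrt_pos.2 (by linarith [Finset.sum_nonneg fun k (_ : k ∈ Finset.univ) => hw k])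
  have hbound : μ[fun ω => lyap w (q' ω) - lyap w (q ω) | 𝓗]
      ≤ᵐ[μ] fun ω => B - c * √(lyap w (q ω)) := by
    filter_upwards [hdrift] with ω h
    have hsqrt : c * √(lyap w (q ω)) ≤ ε * ∑ k, |q ω k| := by
      rw [div_mul_eq_mul_div, div_le_iff₀ hW, mul_assoc]
      exact mul_le_mul_of_nonneg_left
        (by linarith [sqrt_lyap_le_mul_sum_abs hw (q ω)]) hε
    linarith
  have hL3 : Integrable (fun ω => √(lyap w (q ω)) ^ 3) μ :=
    integrable_sqrt_pow_three (ae_of_all _ fun ω => lyap_nonneg hw _) hL hL2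
  have hexpand : ∀ ω, lyap w (q ω) * (B - c * √(lyap w (q ω))) =
      B * lyap w (q ω) - c * √(lyap w (q ω)) ^ 3 := fun ω => by
    rw [pow_succ, Real.sq_sqrt (lyap_nonneg hw _)]
    ring
  have hrhs : Integrable (fun ω => B * lyap w (q ω) - c * √(lyap w (q ω)) ^ 3) μ :=
    (hL.const_mul B).sub (hL3.const_mul c)
  calc ∫ ω, lyap w (q ω) * (lyap w (q' ω) - lyap w (q ω)) ∂μ
      ≤ ∫ ω, lyap w (q ω) * (B - c * √(lyap w (q ω))) ∂μ :=
        integral_mul_le_integral_mul_of_condExp_le h𝓗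
          (continuous_lyap.measurable.comp hq𝓗).aestronglyMeasurable
          (ae_of_all _ fun ω => lyap_nonneg hw _) (hL'.sub hL) hLΔ
          (by simpa only [hexpand] using hrhs) hbound
    _ = B * ∫ ω, lyap w (q ω) ∂μ - c * ∫ ω, √(lyap w (q ω)) ^ 3 ∂μ := by
        simp only [hexpand]
        rw [integral_sub (hL.const_mul B) (hL3.const_mul c), integral_const_mul,
          integral_const_mul]

theorem integral_sq_lyap_succ_le [IsProbabilityMeasure μ] (hw : ∀ k, 0 ≤ w k)
    (hq : Measurable q) (hq' : Measurable q') (hL : Integrable (fun ω => lyap w (q ω)) μ)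
    (hL2 : Integrable (fun ω => lyap w (q ω) ^ 2) μ) (hL' : Integrable (fun ω => lyap w (q' ω)) μ)
    (hd4int : ∀ k, Integrable (fun ω => (q' ω k - q ω k) ^ 4) μ)
    (hd4 : ∀ k, μ[fun ω => (q' ω k - q ω k) ^ 4 | MeasurableSpace.comap q inferInstance]
      ≤ᵐ[μ] fun _ => D)
    {B ε : ℝ} (hε : 0 ≤ ε) {𝓗 : MeasurableSpace Ω} (h𝓗 : 𝓗 ≤ mΩ) (hq𝓗 : Measurable[𝓗] q)
    (hdrift : μ[fun ω => lyap w (q' ω) - lyap w (q ω) | 𝓗]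
      ≤ᵐ[μ] fun ω => B - ε * ∑ k, |q ω k|) :
    Integrable (fun ω => lyap w (q' ω) ^ 2) μ ∧
      ∫ ω, lyap w (q' ω) ^ 2 ∂μ ≤ ∫ ω, lyap w (q ω) ^ 2 ∂μ
        + (2 * B + 2 * (∑ k, w k) * (1 + D)) * ∫ ω, lyap w (q ω) ∂μ + (∑ k, w k) ^ 2 * D / 2
        - 2 * (ε / √(∑ k, w k + 1)) * ∫ ω, √(lyap w (q ω)) ^ 3 ∂μ := by
  obtain ⟨hΔ2, hΔ2_le⟩ := integral_sq_lyap_sub_le hw hq hq' hL hL2 hd4int hd4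
  have hLΔ : Integrable (fun ω => lyap w (q ω) * (lyap w (q' ω) - lyap w (q ω))) μ :=
    integrable_mul_of_integrable_sq (by fun_prop) (by fun_prop) hL2 hΔ2
  have hLΔ_le := integral_lyap_mul_sub_le_of_drift hw hL hL2 hL' hLΔ hε h𝓗 hq𝓗 hdrift
  have hfirst : Integrable (fun ω => lyap w (q ω) ^ 2 +
      2 * (lyap w (q ω) * (lyap w (q' ω) - lyap w (q ω)))) μ := hL2.add (hLΔ.const_mul 2)
  have hsplit : (fun ω => lyap w (q' ω) ^ 2) = fun ω => lyap w (q ω) ^ 2 +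
      2 * (lyap w (q ω) * (lyap w (q' ω) - lyap w (q ω))) + (lyap w (q' ω) - lyap w (q ω)) ^ 2 :=
    funext fun ω => by ring
  rw [hsplit]
  refine ⟨hfirst.add hΔ2, ?_⟩
  rw [integral_add hfirst hΔ2, integral_add hL2 (hLΔ.const_mul 2), integral_const_mul]
  linarith


theorem exists_integral_sq_lyap_succ_sub_le [IsProbabilityMeasure μ] (hw : ∀ k, 0 ≤ w k)
    (hD : 0 ≤ D) {B ε : ℝ} (hB : 0 < B) (hε : 0 < ε) :
    ∃ C > 0, ∃ c > 0, ∀ {q q' : Ω → Fin K → ℝ},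
      Measurable q → Measurable q' → Integrable (fun ω => lyap w (q ω)) μ →
      Integrable (fun ω => lyap w (q ω) ^ 2) μ → Integrable (fun ω => lyap w (q' ω)) μ →
      (∀ k, Integrable (fun ω => (q' ω k - q ω k) ^ 4) μ) →
      (∀ k, μ[fun ω => (q' ω k - q ω k) ^ 4 | MeasurableSpace.comap q inferInstance]
        ≤ᵐ[μ] fun _ => D) →
      ∀ {𝓗 : MeasurableSpace Ω}, 𝓗 ≤ mΩ → Measurable[𝓗] q →
      μ[fun ω => lyap w (q' ω) - lyap w (q ω) | 𝓗] ≤ᵐ[μ] (fun ω => B - ε * ∑ k, |q ω k|) →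
      Integrable (fun ω => lyap w (q' ω) ^ 2) μ ∧
        ∫ ω, lyap w (q' ω) ^ 2 ∂μ - ∫ ω, lyap w (q ω) ^ 2 ∂μ ≤
          C - c * ∫ ω, √(lyap w (q ω)) ^ 3 ∂μ := by
  have hW : 0 ≤ ∑ k, w k := Finset.sum_nonneg fun k _ => hw k
  set c := ε / √(∑ k, w k + 1) with hc_def
  set a := 2 * B + 2 * (∑ k, w k) * (1 + D) with ha_def
  have hc : 0 < c := div_pos hε (Real.sqrt_pos.2 (by linarith))
  have ha : 0 < a := by positivity
  refine ⟨(∑ k, w k) ^ 2 * D / 2 + a ^ 3 / c ^ 2, by positivity, c, hc, ?_⟩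
  intro q q' hq hq' hL hL2 hL' hd4int hd4 𝓗 h𝓗 hq𝓗 hdrift
  obtain ⟨hint, hle⟩ :=
    integral_sq_lyap_succ_le hw hq hq' hL hL2 hL' hd4int hd4 hε.le h𝓗 hq𝓗 hdrift
  rw [← ha_def, ← hc_def] at hle
  have habsorb := mul_integral_le_integral_sqrt_pow_three_add
    (ae_of_all _ fun ω => lyap_nonneg hw (q ω)) hL
    (integrable_sqrt_pow_three (ae_of_all _ fun ω => lyap_nonneg hw _) hL hL2) ha.le hc
  exact ⟨hint, by linarith⟩

end OneStep

section History

variable {Ω : Type*} {mΩ : MeasurableSpace Ω} {K : ℕ} {Q : ℕ → Ω → Fin K → ℝ}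

theorem qHist_le (hQ : ∀ t, Measurable (Q t)) (t : ℕ) : qHist Q t ≤ mΩ :=
  iSup₂_le fun i _ => (hQ i).comap_le

theorem measurable_qHist (t : ℕ) : Measurable[qHist Q t] (Q t) :=
  Measurable.of_comap_le (le_iSup₂ (f := fun i (_ : i ∈ Finset.range (t + 1)) =>
    MeasurableSpace.comap (Q i) inferInstance) t (Finset.self_mem_range_succ t))

end History

/-- Bounded time-average third moment under drift: if the one-step queue
changes have conditional fourth moments bounded by `D`, `E[‖Q(0)‖⁴] < ∞`, and the drift
condition `Δ(H(t)) ≤ B̃ - ε ∑ₖ |Qₖ(t)|` holds with `ε > 0`, then there is `b > 0` with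
`(1/M) ∑_{t<M} E[‖Q(t)‖³] ≤ b` for all positive `M`. -/
theorem bounded_time_average_third_moment
    {Ω : Type*} [MeasureSpace Ω] [IsProbabilityMeasure (ℙ : Measure Ω)]
    {K : ℕ} (w : Fin K → ℝ) (hw : ∀ k, 0 < w k)
    (Q : ℕ → Ω → Fin K → ℝ)
    (hQm : ∀ t, Measurable (Q t))
    (hLint : ∀ t, Integrable (fun ω => lyap w (Q t ω)) ℙ)
    (D : ℝ) (hD : 0 < D)
    (hd4int : ∀ t k, Integrable (fun ω => (Q (t + 1) ω k - Q t ω k) ^ 4) ℙ)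
    (hd4 : ∀ t k, ∀ᵐ ω ∂(ℙ : Measure Ω),
      ((ℙ : Measure Ω)[fun ω' => (Q (t + 1) ω' k - Q t ω' k) ^ 4 |
          MeasurableSpace.comap (Q t) inferInstance]) ω ≤ D)
    (hL0four : Integrable (fun ω => Real.sqrt (lyap w (Q 0 ω)) ^ 4) ℙ)
    (Btil ε : ℝ) (hB : 0 < Btil) (hε : 0 < ε)
    (hdrift : ∀ t, ∀ᵐ ω ∂(ℙ : Measure Ω),
      ((ℙ : Measure Ω)[fun ω' => lyap w (Q (t + 1) ω') - lyap w (Q t ω') | qHist Q t]) ω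
        ≤ Btil - ε * ∑ k, |Q t ω k|) :
    ∃ b > 0, ∀ M : ℕ, 0 < M →
      (1 / (M : ℝ)) * ∑ t ∈ Finset.range M,
        ∫ ω, Real.sqrt (lyap w (Q t ω)) ^ 3 ∂(ℙ : Measure Ω) ≤ b := by
  have hw0 : ∀ k, 0 ≤ w k := fun k => (hw k).le
  obtain ⟨C, hC, c, hc, hstep⟩ :=
    exists_integral_sq_lyap_succ_sub_le (μ := (ℙ : Measure Ω)) hw0 hD.le hB hε
  have hmoment := fun t (hL2 : Integrable (fun ω => lyap w (Q t ω) ^ 2) ℙ) =>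
    hstep (hQm t) (hQm (t + 1)) (hLint t) hL2 (hLint (t + 1)) (hd4int t) (hd4 t)
      (qHist_le hQm t) (measurable_qHist t) (hdrift t)
  have hL2 : ∀ t, Integrable (fun ω => lyap w (Q t ω) ^ 2) ℙ := by
    intro t
    induction t with
    | zero =>
      refine hL0four.congr (ae_of_all _ fun ω => ?_)
      dsimp only
      rw [show 4 = 2 * 2 from rfl, pow_mul, Real.sq_sqrt (lyap_nonneg hw0 _)]
    | succ t ih => exact (hmoment t ih).1
  refine ⟨(∫ ω, lyap w (Q 0 ω) ^ 2 ∂ℙ + C) / c, by positivity, fun M hM => ?_⟩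
  exact average_le_of_sub_le (a := fun t => ∫ ω, lyap w (Q t ω) ^ 2 ∂ℙ)
    (x := fun t => ∫ ω, √(lyap w (Q t ω)) ^ 3 ∂ℙ) hc
    (fun t => integral_nonneg fun ω => sq_nonneg _) (fun t => (hmoment t (hL2 t)).2) hM
end

section
/- Sparse-subsequence rate stability: Let Q(t) ≥ 0 be a stochastic process, and suppose there exist a finite C > 0 and positive integer t* with E[Q(t)²] ≤ Ct for all t ≥ t*. Fix δ > 0 and define t_n = ⌈n^(1+δ)⌉. Then lim_{n→∞} Q(t_n)/t_n = 0 with probability 1. -/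
open MeasureTheory ProbabilityTheory Filter Topology

/-- Sparse-subsequence rate stability: if `Q(t) ≥ 0` and
`E[Q(t)²] ≤ Ct` for all `t ≥ t*`, then for any `δ > 0` and `tₙ = ⌈n^(1+δ)⌉` we have
`Q(tₙ)/tₙ → 0` with probability 1. -/
theorem sparse_subsequence_rate_stability
    {Ω : Type*} [MeasureSpace Ω] [IsProbabilityMeasure (ℙ : Measure Ω)]
    (Q : ℕ → Ω → ℝ)
    (hmeas : ∀ t, Measurable (Q t))
    (hpos : ∀ t ω, 0 ≤ Q t ω)
    (hint2 : ∀ t, Integrable (fun ω => (Q t ω) ^ 2) ℙ)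
    (C : ℝ) (hC : 0 < C) (tstar : ℕ) (htstar : 0 < tstar)
    (h2 : ∀ t : ℕ, tstar ≤ t → ∫ ω, (Q t ω) ^ 2 ∂(ℙ : Measure Ω) ≤ C * t)
    (δ : ℝ) (hδ : 0 < δ) :
    ∀ᵐ ω ∂(ℙ : Measure Ω),
      Tendsto (fun n : ℕ => Q (⌈(n : ℝ) ^ (1 + δ)⌉₊) ω / (⌈(n : ℝ) ^ (1 + δ)⌉₊ : ℝ))
        atTop (𝓝 0) := by
  set T : ℕ → ℕ := fun n => ⌈(n : ℝ) ^ (1 + δ)⌉₊ with hTdef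
  have h1δ : (1:ℝ) < 1 + δ := by linarith
  have hTrpow : ∀ n : ℕ, (n : ℝ) ^ (1 + δ) ≤ T n := fun n => Nat.le_ceil _
  have hTle : ∀ n : ℕ, (n : ℝ) ≤ T n := by
    intro n
    rcases Nat.eq_zero_or_pos n with h | h
    · simp [h]
    · calc (n : ℝ) = (n : ℝ) ^ (1:ℝ) := (Real.rpow_one _).symm
        _ ≤ (n : ℝ) ^ (1 + δ) :=
          Real.rpow_le_rpow_of_exponent_le (by exact_mod_cast h) (by linarith)
        _ ≤ T n := hTrpow n
  have hTnat : ∀ n : ℕ, n ≤ T n := fun n => by exact_mod_cast hTle n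
  -- For each k, the a.e. eventual bound with ε = 1/(k+1)
  have key : ∀ k : ℕ, ∀ᵐ ω ∂(ℙ : Measure Ω),
      ∀ᶠ n in atTop, Q (T n) ω < (1 / (k + 1 : ℝ)) * T n := by
    intro k
    set ε : ℝ := 1 / (k + 1 : ℝ) with hεdef
    have hε : 0 < ε := by positivity
    set N : ℕ := tstar with hNdef
    set s : ℕ → Set Ω := fun m => {ω | ε * (T (N + m) : ℝ) ≤ Q (T (N + m)) ω} with hsdef
    -- measure bound
    have hbound : ∀ m : ℕ,
        (ℙ : Measure Ω) (s m) ≤ ENNReal.ofReal (C / (ε ^ 2 * ((N + m : ℕ) : ℝ) ^ (1 + δ))) := by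
      intro m
      set n : ℕ := N + m with hndef
      set t : ℕ := T n with htdef
      have hn1 : 1 ≤ n := le_trans htstar (Nat.le_add_right _ _)
      have ht1 : 1 ≤ t := le_trans hn1 (hTnat n)
      have htpos : (0:ℝ) < t := by exact_mod_cast ht1
      have htstar_t : tstar ≤ t := le_trans (Nat.le_add_right _ _) (hTnat n)
      have hP : (0:ℝ) < (n : ℝ) ^ (1 + δ) := by
        apply Real.rpow_pos_of_pos; exact_mod_cast hn1
      have hPt : (n : ℝ) ^ (1 + δ) ≤ t := hTrpow n
      set a : ℝ := ε * t with hadef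
      have ha : 0 < a := mul_pos hε htpos
      have hsub : s m ⊆ {ω | a ^ 2 ≤ (Q t ω) ^ 2} := by
        intro ω hω
        exact pow_le_pow_left₀ ha.le hω 2
      have hmark := mul_meas_ge_le_integral_of_nonneg
        (μ := (ℙ : Measure Ω)) (f := fun ω => (Q t ω) ^ 2)
        (ae_of_all _ fun ω => sq_nonneg _) (hint2 t) (a ^ 2)
      have hint_le : ∫ ω, (Q t ω) ^ 2 ∂(ℙ : Measure Ω) ≤ C * t := h2 t htstar_t
      have htoReal : ((ℙ : Measure Ω) {ω | a ^ 2 ≤ (Q t ω) ^ 2}).toReal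
          ≤ C / (ε ^ 2 * (n : ℝ) ^ (1 + δ)) := by
        have ha2 : 0 < a ^ 2 := by positivity
        have h1 : ((ℙ : Measure Ω) {ω | a ^ 2 ≤ (Q t ω) ^ 2}).toReal ≤ C * t / a ^ 2 := by
          rw [le_div_iff₀ ha2, mul_comm]
          exact hmark.trans hint_le
        refine h1.trans ?_
        rw [div_le_div_iff₀ ha2 (by positivity)]
        have : a ^ 2 = ε ^ 2 * (t:ℝ) ^ 2 := by rw [hadef]; ring
        rw [this]
        have hε2 : (0:ℝ) < ε ^ 2 := by positivity
        nlinarith [mul_pos hε2 htpos, mul_nonneg (mul_nonneg hC.le hε2.le) htpos.le,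
          mul_le_mul_of_nonneg_left hPt (mul_nonneg (mul_nonneg hC.le hε2.le) htpos.le)]
      calc (ℙ : Measure Ω) (s m) ≤ (ℙ : Measure Ω) {ω | a ^ 2 ≤ (Q t ω) ^ 2} :=
            measure_mono hsub
        _ = ENNReal.ofReal (((ℙ : Measure Ω) {ω | a ^ 2 ≤ (Q t ω) ^ 2}).toReal) :=
            (ENNReal.ofReal_toReal (measure_ne_top _ _)).symm
        _ ≤ ENNReal.ofReal (C / (ε ^ 2 * (n : ℝ) ^ (1 + δ))) :=
            ENNReal.ofReal_le_ofReal htoReal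
    -- summability of the bounding series
    have hsum0 : Summable (fun n : ℕ => C / (ε ^ 2 * (n : ℝ) ^ (1 + δ))) := by
      have h1 : Summable (fun n : ℕ => 1 / (n : ℝ) ^ (1 + δ)) :=
        Real.summable_one_div_nat_rpow.2 h1δ
      have := h1.mul_left (C / ε ^ 2)
      refine this.congr fun n => ?_
      rw [div_mul_eq_mul_div, mul_one_div, div_div, mul_comm]
    have hsum : Summable (fun m : ℕ => C / (ε ^ 2 * ((N + m : ℕ) : ℝ) ^ (1 + δ))) := by
      have := (summable_nat_add_iff (f := fun n : ℕ => C / (ε ^ 2 * (n : ℝ) ^ (1 + δ))) N).2 hsum0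
      exact this.congr fun m => by rw [Nat.add_comm]
    have hnonneg : ∀ m : ℕ, 0 ≤ C / (ε ^ 2 * ((N + m : ℕ) : ℝ) ^ (1 + δ)) := by
      intro m
      apply div_nonneg hC.le
      apply mul_nonneg (by positivity) (Real.rpow_nonneg (Nat.cast_nonneg _) _)
    have htsum : (∑' m, (ℙ : Measure Ω) (s m)) ≠ ⊤ := by
      apply ne_top_of_le_ne_top (b := ∑' m, ENNReal.ofReal (C / (ε ^ 2 * ((N + m : ℕ) : ℝ) ^ (1 + δ))))
      · rw [← ENNReal.ofReal_tsum_of_nonneg hnonneg hsum]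
        exact ENNReal.ofReal_ne_top
      · exact ENNReal.tsum_le_tsum hbound
    have hBC := ae_eventually_notMem htsum
    filter_upwards [hBC] with ω hω
    obtain ⟨M, hM⟩ := eventually_atTop.1 hω
    refine eventually_atTop.2 ⟨N + M, fun n hn => ?_⟩
    have h1 := hM (n - N) (by omega)
    have h2' : N + (n - N) = n := by omega
    simp only [hsdef, Set.mem_setOf_eq, not_le] at h1
    rw [h2'] at h1
    exact h1
  rw [← ae_all_iff] at key
  filter_upwards [key] with ω hω
  rw [Metric.tendsto_atTop]
  intro ε' hε'
  obtain ⟨k, hk⟩ := exists_nat_one_div_lt hε'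
  obtain ⟨M, hM⟩ := eventually_atTop.1 (hω k)
  refine ⟨max M 1, fun n hn => ?_⟩
  have hMn := hM n (le_trans (le_max_left _ _) hn)
  have hn1 : 1 ≤ n := le_trans (le_max_right _ _) hn
  have ht1 : 1 ≤ T n := le_trans hn1 (hTnat n)
  have htpos : (0:ℝ) < T n := by exact_mod_cast ht1
  rw [Real.dist_eq, sub_zero, abs_of_nonneg (div_nonneg (hpos _ _) htpos.le)]
  calc Q (T n) ω / (T n : ℝ) < 1 / (k + 1 : ℝ) := (div_lt_iff₀ htpos).2 (by linarith)
    _ < ε' := hk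
end

section
/- Rate stability from linear second-moment growth and bounded increment variance: Let Q(t) ≥ 0 be a stochastic process such that (i) there exist a finite C > 0 and a positive integer t* with E[Q(t)²] ≤ Ct for all t ≥ t*, and (ii) there is a finite D > 0 with E[(Q(t+1) − Q(t))²] ≤ D for all t. Then lim_{t→∞} Q(t)/t = 0 with probability 1. -/
/-!
Along the sampling times `t_n = ⌈n^{3/2}⌉` the second moment of `Q(t_n) / t_n` is `O(1 / t_n)`,
which is summable, so `∑ (Q(t_n) / t_n)² < ∞` and hence `Q(t_n) / t_n → 0` almost surely. In the
same way `E[(Q(s+1) - Q(s))²] ≤ D` gives `Q(s+1) - Q(s) = o(s^{3/5})` almost surely. Every `t` lies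
within `O(t^{1/3})` steps above a sampling time, and over these steps `Q` moves by
`O(t^{1/3 + 3/5}) = o(t)`.
-/

open MeasureTheory ProbabilityTheory Filter Topology

section SecondMoment

variable {Ω : Type*} [MeasurableSpace Ω] {μ : Measure Ω}

theorem ae_tendsto_zero_of_summable_integral_sq {Z : ℕ → Ω → ℝ}
    (hint : ∀ n, Integrable (fun ω => Z n ω ^ 2) μ)
    (hsum : Summable fun n => ∫ ω, Z n ω ^ 2 ∂μ) :
    ∀ᵐ ω ∂μ, Tendsto (fun n => Z n ω) atTop (𝓝 0) := by
  have hL1 : ∑' n, eLpNorm (fun ω => Z n ω ^ 2) 1 μ ≠ ⊤ := by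
    simp_rw [eLpNorm_one_eq_lintegral_enorm, ← ofReal_integral_norm_eq_lintegral_enorm (hint _),
      Real.norm_eq_abs, abs_sq]
    rw [← ENNReal.ofReal_tsum_of_nonneg (fun n => integral_nonneg fun ω => sq_nonneg _) hsum]
    exact ENNReal.ofReal_ne_top
  filter_upwards [summable_norm_of_tsum_eLpNorm_ne_top le_rfl
    (fun n => (hint n).aestronglyMeasurable) hL1] with ω hω
  have hsq : Tendsto (fun n => Z n ω ^ 2) atTop (𝓝 0) := by
    simpa [Real.norm_eq_abs, abs_sq] using hω.tendsto_atTop_zero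
  rw [tendsto_zero_iff_abs_tendsto_zero, Function.comp_def]
  simpa only [Real.sqrt_sq_eq_abs, Real.sqrt_zero] using hsq.sqrt

theorem ae_tendsto_div_zero_of_summable {Y : ℕ → Ω → ℝ} {c : ℕ → ℝ}
    (hint : ∀ n, Integrable (fun ω => Y n ω ^ 2) μ)
    (hsum : Summable fun n => (∫ ω, Y n ω ^ 2 ∂μ) / c n ^ 2) :
    ∀ᵐ ω ∂μ, Tendsto (fun n => Y n ω / c n) atTop (𝓝 0) :=
  ae_tendsto_zero_of_summable_integral_sq
    (fun n => by simpa only [div_pow] using (hint n).div_const (c n ^ 2))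
    (by simpa only [div_pow, integral_div] using hsum)

theorem ae_tendsto_div_rpow_zero_of_integral_sq_le {Y : ℕ → Ω → ℝ} {D a : ℝ} (ha : 1 < 2 * a)
    (hint : ∀ n, Integrable (fun ω => Y n ω ^ 2) μ) (hY : ∀ n, ∫ ω, Y n ω ^ 2 ∂μ ≤ D) :
    ∀ᵐ ω ∂μ, Tendsto (fun n : ℕ => Y n ω / (n : ℝ) ^ a) atTop (𝓝 0) := by
  refine ae_tendsto_div_zero_of_summable hint <|
    ((Real.summable_nat_rpow_inv.2 ha).mul_left D).of_nonneg_of_le (fun n => by positivity)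
      fun n => ?_
  rw [← Real.rpow_mul_natCast (Nat.cast_nonneg _), ← div_eq_mul_inv, mul_comm a]
  exact div_le_div_of_nonneg_right (hY n) (by positivity)

end SecondMoment

theorem abs_sub_le_of_abs_succ_sub_le {f : ℕ → ℝ} {u t : ℕ} {c : ℝ} (hut : u ≤ t)
    (h : ∀ s, u ≤ s → s < t → |f (s + 1) - f s| ≤ c) :
    |f t - f u| ≤ (t - u : ℕ) * c := by
  have := dist_le_Ico_sum_of_dist_le (f := f) (d := fun _ => c) hut fun hs hst => by
    rw [dist_comm, Real.dist_eq]; exact h _ hs hst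
  simpa [Real.dist_eq, abs_sub_comm] using this

noncomputable def sampleTime (p : ℝ) (n : ℕ) : ℕ := ⌈(n : ℝ) ^ p⌉₊

section SampleTime

variable {p : ℝ}

theorem tendsto_sampleTime (hp : 0 < p) : Tendsto (sampleTime p) atTop atTop :=
  tendsto_nat_ceil_atTop.comp ((tendsto_rpow_atTop hp).comp tendsto_natCast_atTop_atTop)

theorem summable_inv_sampleTime (hp : 1 < p) :
    Summable fun n => (sampleTime p n : ℝ)⁻¹ := by
  refine (Real.summable_nat_rpow_inv.2 hp).of_nonneg_of_le (fun n => by positivity) fun n => ?_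
  rcases Nat.eq_zero_or_pos n with rfl | hn
  · simp [sampleTime, Real.zero_rpow (by linarith : p ≠ 0)]
  · exact inv_anti₀ (by positivity) (Nat.le_ceil _)

theorem sampleTime_floor_rpow_inv_le (hp : 0 < p) (t : ℕ) :
    sampleTime p ⌊(t : ℝ) ^ p⁻¹⌋₊ ≤ t := by
  refine Nat.ceil_le.2 ?_
  calc (⌊(t : ℝ) ^ p⁻¹⌋₊ : ℝ) ^ p ≤ ((t : ℝ) ^ p⁻¹) ^ p :=
        Real.rpow_le_rpow (Nat.cast_nonneg _) (Nat.floor_le (by positivity)) hp.le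
    _ = t := Real.rpow_inv_rpow (Nat.cast_nonneg _) hp.ne'

theorem sub_sampleTime_floor_rpow_inv_le (hp : 1 ≤ p) (t : ℕ) :
    (t : ℝ) - sampleTime p ⌊(t : ℝ) ^ p⁻¹⌋₊ ≤ p * (t : ℝ) ^ (1 - p⁻¹) := by
  rcases Nat.eq_zero_or_pos t with rfl | ht
  · have : (0 : ℝ) ≤ p * (0 : ℝ) ^ (1 - p⁻¹) := by positivity
    simp only [Nat.cast_zero, zero_sub]
    linarith [Nat.cast_nonneg (α := ℝ) (sampleTime p ⌊(0 : ℝ) ^ p⁻¹⌋₊)]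
  set x := (t : ℝ) ^ p⁻¹
  have ht' : (1 : ℝ) ≤ t := by exact_mod_cast ht
  have hx1 : 1 ≤ x := Real.one_le_rpow ht' (by positivity)
  have hxp : x ^ p = t := Real.rpow_inv_rpow (Nat.cast_nonneg _) (by positivity)
  have hgap : (t : ℝ) ^ (1 - p⁻¹) = t / x := by
    rw [Real.rpow_sub (by positivity), Real.rpow_one]
  -- Bernoulli: `(x - 1)^p = x^p (1 - 1/x)^p ≥ x^p (1 - p/x)`.
  have hbern : (t : ℝ) - p * (t / x) ≤ (x - 1) ^ p := by
    have hx0 : 0 < x := by linarith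
    calc (t : ℝ) - p * (t / x) = x ^ p * (1 + p * -x⁻¹) := by rw [hxp]; ring
      _ ≤ x ^ p * (1 + -x⁻¹) ^ p := by
        gcongr
        exact one_add_mul_self_le_rpow_one_add (by linarith [inv_le_one_of_one_le₀ hx1]) hp
      _ = (x - 1) ^ p := by
        rw [← Real.mul_rpow hx0.le (by linarith [inv_le_one_of_one_le₀ hx1])]
        congr 1; field_simp; ring
  have hfloor : (x - 1) ^ p ≤ sampleTime p ⌊x⌋₊ :=
    calc (x - 1) ^ p ≤ (⌊x⌋₊ : ℝ) ^ p :=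
          Real.rpow_le_rpow (by linarith) (Nat.sub_one_lt_floor x).le (by linarith)
      _ ≤ sampleTime p ⌊x⌋₊ := Nat.le_ceil _
  rw [hgap]
  linarith

theorem abs_div_le_abs_sampleTime_div_add {f : ℕ → ℝ} {a : ℝ} (hp : 1 ≤ p) (ha₀ : 0 ≤ a)
    {t : ℕ} (hu : 1 ≤ sampleTime p ⌊(t : ℝ) ^ p⁻¹⌋₊)
    (hstep : ∀ s, sampleTime p ⌊(t : ℝ) ^ p⁻¹⌋₊ ≤ s → s < t → |f (s + 1) - f s| ≤ (s : ℝ) ^ a) :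
    |f t / t| ≤ |f (sampleTime p ⌊(t : ℝ) ^ p⁻¹⌋₊) / sampleTime p ⌊(t : ℝ) ^ p⁻¹⌋₊|
      + p * (t : ℝ) ^ (-(p⁻¹ - a)) := by
  set u := sampleTime p ⌊(t : ℝ) ^ p⁻¹⌋₊
  have hut : u ≤ t := sampleTime_floor_rpow_inv_le (by linarith) t
  have hu₀ : (0 : ℝ) < u := by exact_mod_cast hu
  have ht₀ : (0 : ℝ) < t := by exact_mod_cast hu.trans hut
  have hdiff : |f t - f u| ≤ (t - u : ℕ) * (t : ℝ) ^ a :=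
    abs_sub_le_of_abs_succ_sub_le hut fun s hs hst =>
      (hstep s hs hst).trans (Real.rpow_le_rpow (Nat.cast_nonneg _) (by exact_mod_cast hst.le) ha₀)
  have hmoves : |f t| ≤ |f u| + p * (t : ℝ) ^ (1 - p⁻¹) * (t : ℝ) ^ a := by
    have : ((t - u : ℕ) : ℝ) * (t : ℝ) ^ a ≤ p * (t : ℝ) ^ (1 - p⁻¹) * (t : ℝ) ^ a :=
      mul_le_mul_of_nonneg_right
        (by rw [Nat.cast_sub hut]; exact sub_sampleTime_floor_rpow_inv_le hp t) (by positivity)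
    linarith [abs_sub_abs_le_abs_sub (f t) (f u)]
  have hpow : p * (t : ℝ) ^ (1 - p⁻¹) * (t : ℝ) ^ a / t = p * (t : ℝ) ^ (-(p⁻¹ - a)) := by
    rw [mul_assoc, mul_div_assoc, ← Real.rpow_add ht₀, ← Real.rpow_sub_one ht₀.ne']
    ring_nf
  calc |f t / t| = |f t| / t := by rw [abs_div, abs_of_pos ht₀]
    _ ≤ (|f u| + p * (t : ℝ) ^ (1 - p⁻¹) * (t : ℝ) ^ a) / t := by gcongr
    _ = |f u| / t + p * (t : ℝ) ^ (-(p⁻¹ - a)) := by rw [add_div, hpow]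
    _ ≤ |f u| / u + p * (t : ℝ) ^ (-(p⁻¹ - a)) := by gcongr
    _ = |f u / u| + p * (t : ℝ) ^ (-(p⁻¹ - a)) := by rw [abs_div, Nat.abs_cast]

theorem eventually_abs_le_of_tendsto_div_rpow {g : ℕ → ℝ} {a : ℝ}
    (hg : Tendsto (fun s : ℕ => g s / (s : ℝ) ^ a) atTop (𝓝 0)) :
    ∀ᶠ s in atTop, |g s| ≤ (s : ℝ) ^ a := by
  filter_upwards [hg.abs.eventually (ge_mem_nhds (by norm_num : |(0 : ℝ)| < 1)),
    eventually_ge_atTop 1] with s hs hs₁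
  have hpos : (0 : ℝ) < (s : ℝ) ^ a := Real.rpow_pos_of_pos (by exact_mod_cast hs₁) _
  rwa [abs_div, abs_of_pos hpos, div_le_one hpos] at hs

theorem tendsto_div_of_tendsto_sampleTime {f : ℕ → ℝ} {a : ℝ} (hp : 1 ≤ p) (ha₀ : 0 ≤ a)
    (ha : a < p⁻¹)
    (hsample : Tendsto (fun n => f (sampleTime p n) / sampleTime p n) atTop (𝓝 0))
    (hstep : Tendsto (fun s : ℕ => (f (s + 1) - f s) / (s : ℝ) ^ a) atTop (𝓝 0)) :
    Tendsto (fun t : ℕ => f t / t) atTop (𝓝 0) := by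
  have hp₀ : 0 < p := by linarith
  have hν : Tendsto (fun t : ℕ => ⌊(t : ℝ) ^ p⁻¹⌋₊) atTop atTop := tendsto_nat_floor_atTop.comp
    ((tendsto_rpow_atTop (inv_pos.2 hp₀)).comp tendsto_natCast_atTop_atTop)
  obtain ⟨S, hS⟩ := (eventually_abs_le_of_tendsto_div_rpow hstep).exists_forall_of_atTop
  have hbound : ∀ᶠ t : ℕ in atTop, |f t / t| ≤
      |f (sampleTime p ⌊(t : ℝ) ^ p⁻¹⌋₊) / sampleTime p ⌊(t : ℝ) ^ p⁻¹⌋₊|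
        + p * (t : ℝ) ^ (-(p⁻¹ - a)) := by
    filter_upwards [((tendsto_sampleTime hp₀).comp hν).eventually_ge_atTop (max S 1)] with t ht
    exact abs_div_le_abs_sampleTime_div_add hp ha₀ ((le_max_right _ _).trans ht)
      fun s hs _ => hS s ((le_max_left _ _).trans (ht.trans hs))
  refine squeeze_zero_norm' hbound ?_
  simpa using ((hsample.comp hν).abs.add
    (((tendsto_rpow_neg_atTop (sub_pos.2 ha)).comp tendsto_natCast_atTop_atTop).const_mul p))

theorem ae_tendsto_div_sampleTime_zero {Ω : Type*} [MeasurableSpace Ω] {μ : Measure Ω}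
    {Y : ℕ → Ω → ℝ} {C : ℝ} (hp : 1 < p) (hint : ∀ t, Integrable (fun ω => Y t ω ^ 2) μ)
    (hY : ∀ᶠ t in atTop, ∫ ω, Y t ω ^ 2 ∂μ ≤ C * t) :
    ∀ᵐ ω ∂μ, Tendsto (fun n => Y (sampleTime p n) ω / sampleTime p n) atTop (𝓝 0) := by
  refine ae_tendsto_div_zero_of_summable (fun n => hint _)
    (((summable_inv_sampleTime hp).mul_left C).of_norm_bounded_eventually_nat ?_)
  filter_upwards [(tendsto_sampleTime (by linarith)).eventually (hY.and (eventually_ge_atTop 1))]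
    with n ⟨hn, hn₁⟩
  have hT : (0 : ℝ) < sampleTime p n := by exact_mod_cast hn₁
  rw [Real.norm_of_nonneg (by positivity), div_le_iff₀ (by positivity)]
  calc ∫ ω, Y (sampleTime p n) ω ^ 2 ∂μ ≤ C * sampleTime p n := hn
    _ = C * (sampleTime p n : ℝ)⁻¹ * (sampleTime p n : ℝ) ^ 2 := by field_simp

end SampleTime

theorem rate_stability_from_linear_growth_general
    {Ω : Type*} [MeasureSpace Ω]
    (Q : ℕ → Ω → ℝ)
    (hint2 : ∀ t, Integrable (fun ω => (Q t ω) ^ 2) ℙ)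
    (C : ℝ) (tstar : ℕ)
    (h2 : ∀ t : ℕ, tstar ≤ t → ∫ ω, (Q t ω) ^ 2 ∂(ℙ : Measure Ω) ≤ C * t)
    (D : ℝ)
    (hdint : ∀ t, Integrable (fun ω => (Q (t + 1) ω - Q t ω) ^ 2) ℙ)
    (hd : ∀ t, ∫ ω, (Q (t + 1) ω - Q t ω) ^ 2 ∂(ℙ : Measure Ω) ≤ D) :
    ∀ᵐ ω ∂(ℙ : Measure Ω), Tendsto (fun t : ℕ => Q t ω / (t : ℝ)) atTop (𝓝 0) := by
  have hsample := ae_tendsto_div_sampleTime_zero (μ := ℙ) (by norm_num : (1 : ℝ) < 3 / 2) hint2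
    (eventually_atTop.2 ⟨tstar, h2⟩)
  have hstep := ae_tendsto_div_rpow_zero_of_integral_sq_le (μ := ℙ)
    (by norm_num : (1 : ℝ) < 2 * (3 / 5)) hdint hd
  filter_upwards [hsample, hstep] with ω hωT hωs
  exact tendsto_div_of_tendsto_sampleTime (by norm_num) (by norm_num) (by norm_num) hωT hωs

/-- Rate stability from linear second-moment growth and bounded increment
variance: if `Q(t) ≥ 0`, `E[Q(t)²] ≤ Ct` for all `t ≥ t*`, and
`E[(Q(t+1) - Q(t))²] ≤ D` for all `t`, then `Q(t)/t → 0` with probability 1. -/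
theorem rate_stability_from_linear_growth
    {Ω : Type*} [MeasureSpace Ω] [IsProbabilityMeasure (ℙ : Measure Ω)]
    (Q : ℕ → Ω → ℝ)
    (hmeas : ∀ t, Measurable (Q t))
    (hpos : ∀ t ω, 0 ≤ Q t ω)
    (hint2 : ∀ t, Integrable (fun ω => (Q t ω) ^ 2) ℙ)
    (C : ℝ) (hC : 0 < C) (tstar : ℕ) (htstar : 0 < tstar)
    (h2 : ∀ t : ℕ, tstar ≤ t → ∫ ω, (Q t ω) ^ 2 ∂(ℙ : Measure Ω) ≤ C * t)
    (D : ℝ) (hD : 0 < D)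
    (hdint : ∀ t, Integrable (fun ω => (Q (t + 1) ω - Q t ω) ^ 2) ℙ)
    (hd : ∀ t, ∫ ω, (Q (t + 1) ω - Q t ω) ^ 2 ∂(ℙ : Measure Ω) ≤ D) :
    ∀ᵐ ω ∂(ℙ : Measure Ω), Tendsto (fun t : ℕ => Q t ω / (t : ℝ)) atTop (𝓝 0) :=
  rate_stability_from_linear_growth_general Q hint2 C tstar h2 D hdint hd
end

section
/- Rate stability from bounded drift (Theorem on rate stability, part b): Let Q(t) ∈ ℝ^K, L(Q(t)) = (1/2)∑_k w_k Q_k(t)² with w_k > 0. Suppose Q(0) is finite with probability 1, that there is a finite B > 0 with E[L(Q(t+1)) − L(Q(t)) | H(t)] ≤ B for all t and histories, and that there is a finite D > 0 with E[(Q_k(t+1) − Q_k(t))²] ≤ D for all t and k. Then for each k, lim_{t→∞} Q_k(t)/t = 0 with probability 1. -/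
open MeasureTheory ProbabilityTheory Filter Topology

lemma aux_ae_tendsto {Ω : Type*} [MeasureSpace Ω] [IsProbabilityMeasure (ℙ : Measure Ω)]
    (X : ℕ → Ω → ℝ) (hXnn : ∀ n ω, 0 ≤ X n ω)
    (hXm : ∀ n, Measurable (X n))
    (hXint : ∀ n, Integrable (fun ω => (X n ω) ^ 2) ℙ)
    (C : ℝ)
    (hXb : ∀ n, ∫ ω, (X n ω) ^ 2 ∂(ℙ : Measure Ω) ≤ C / ((n : ℝ) + 1) ^ 2) :
    ∀ᵐ ω ∂(ℙ : Measure Ω), Tendsto (fun n => X n ω) atTop (𝓝 0) := by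
  set g : ℕ → Ω → ENNReal := fun n ω => ENNReal.ofReal ((X n ω) ^ 2) with hg
  have hgm : ∀ n, Measurable (g n) := fun n =>
    ENNReal.measurable_ofReal.comp ((hXm n).pow_const 2)
  have hgb : ∀ n, ∫⁻ ω, g n ω ∂(ℙ : Measure Ω) ≤ ENNReal.ofReal (C / ((n : ℝ) + 1) ^ 2) := by
    intro n
    rw [← ofReal_integral_eq_lintegral_ofReal (hXint n) (ae_of_all _ fun ω => sq_nonneg _)]
    exact ENNReal.ofReal_le_ofReal (hXb n)
  have hsum : Summable (fun n : ℕ => C / ((n : ℝ) + 1) ^ 2) := by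
    have h1 : Summable (fun n : ℕ => 1 / ((n : ℝ)) ^ 2) :=
      Real.summable_one_div_nat_pow.mpr one_lt_two
    have h2 : Summable (fun n : ℕ => 1 / ((n : ℝ) + 1) ^ 2) := by
      have := h1.comp_injective Nat.succ_injective
      apply this.congr
      intro n
      simp only [Function.comp, Nat.succ_eq_add_one]
      push_cast
      ring
    simpa [div_eq_mul_inv, one_mul] using h2.mul_left C
  have hC0 : 0 ≤ C := by
    have := (integral_nonneg (fun ω => sq_nonneg (X 0 ω))).trans (hXb 0)
    by_contra h
    push_neg at h
    have : C / ((0 : ℝ) + 1) ^ 2 < 0 := by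
      apply div_neg_of_neg_of_pos h; norm_num
    linarith
  have htsum : ∑' n, ∫⁻ ω, g n ω ∂(ℙ : Measure Ω) ≠ ⊤ := by
    apply ne_top_of_le_ne_top (b := ∑' n : ℕ, ENNReal.ofReal (C / ((n : ℝ) + 1) ^ 2))
    · rw [← ENNReal.ofReal_tsum_of_nonneg (fun n => by positivity) hsum]
      exact ENNReal.ofReal_ne_top
    · exact ENNReal.tsum_le_tsum hgb
  have key : ∀ᵐ ω ∂(ℙ : Measure Ω), (∑' n, g n ω) < ⊤ := by
    apply ae_lt_top (Measurable.ennreal_tsum hgm)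
    rw [lintegral_tsum (fun n => (hgm n).aemeasurable)]
    exact htsum
  filter_upwards [key] with ω hω
  have hg0 : Tendsto (fun n => g n ω) atTop (𝓝 0) :=
    ENNReal.tendsto_atTop_zero_of_tsum_ne_top hω.ne
  have hsq : Tendsto (fun n => (X n ω) ^ 2) atTop (𝓝 0) := by
    have h := (ENNReal.tendsto_toReal (a := 0) (by simp)).comp hg0
    simp only [ENNReal.toReal_zero] at h
    apply h.congr
    intro n
    simp [hg, Function.comp, ENNReal.toReal_ofReal (sq_nonneg _)]
  have h2 := (Real.continuous_sqrt.tendsto 0).comp hsq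
  rw [Real.sqrt_zero] at h2
  apply h2.congr
  intro n
  simp [Function.comp, Real.sqrt_sq (hXnn n ω)]

lemma aux_det (u : ℕ → ℝ) (X : ℕ → ℝ)
    (hb : ∀ t : ℕ, 1 ≤ t → |u t| ≤ X (Nat.sqrt t))
    (hX : Tendsto (fun m => X (m + 1)) atTop (𝓝 0)) :
    Tendsto u atTop (𝓝 0) := by
  have hX' : Tendsto X atTop (𝓝 0) := (tendsto_add_atTop_iff_nat 1).mp hX
  have hsq : Tendsto Nat.sqrt atTop atTop :=
    tendsto_atTop_atTop_of_monotone (fun a b h => Nat.sqrt_le_sqrt h)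
      (fun b => ⟨b * b, (Nat.sqrt_eq b).ge⟩)
  have hcomp : Tendsto (fun t => X (Nat.sqrt t)) atTop (𝓝 0) := hX'.comp hsq
  rw [tendsto_zero_iff_abs_tendsto_zero]
  apply squeeze_zero' (Eventually.of_forall fun t => abs_nonneg _)
    (by filter_upwards [eventually_ge_atTop 1] with t ht; exact hb t ht) hcomp

/-- Rate stability from bounded drift: if the conditional Lyapunov drift
is at most `B` for all `t` and histories, and the increments have second moments bounded
by `D`, then every queue is rate stable: `Qₖ(t)/t → 0` with probability 1. -/
theorem rate_stability_from_bounded_drift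
    {Ω : Type*} [MeasureSpace Ω] [IsProbabilityMeasure (ℙ : Measure Ω)]
    {K : ℕ} (w : Fin K → ℝ) (hw : ∀ k, 0 < w k)
    (Q : ℕ → Ω → Fin K → ℝ)
    (hQm : ∀ t, Measurable (Q t))
    (hLint : ∀ t, Integrable (fun ω => lyap w (Q t ω)) ℙ)
    (B : ℝ) (hB : 0 < B)
    (hdrift : ∀ t, ∀ᵐ ω ∂(ℙ : Measure Ω),
      ((ℙ : Measure Ω)[fun ω' => lyap w (Q (t + 1) ω') - lyap w (Q t ω') | qHist Q t]) ω ≤ B)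
    (D : ℝ) (hD : 0 < D)
    (hdint : ∀ t k, Integrable (fun ω => (Q (t + 1) ω k - Q t ω k) ^ 2) ℙ)
    (hd : ∀ t k, ∫ ω, (Q (t + 1) ω k - Q t ω k) ^ 2 ∂(ℙ : Measure Ω) ≤ D) :
    ∀ᵐ ω ∂(ℙ : Measure Ω), ∀ k, Tendsto (fun t : ℕ => Q t ω k / (t : ℝ)) atTop (𝓝 0) := by
  -- expected Lyapunov bound
  have hm0 : ∀ t, qHist Q t ≤ (inferInstance : MeasurableSpace Ω) := by
    intro t
    apply iSup₂_le
    intro i _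
    exact (hQm i).comap_le
  have hLnn : ∀ t ω, 0 ≤ lyap w (Q t ω) := by
    intro t ω
    unfold lyap
    have : ∀ j ∈ Finset.univ, (0:ℝ) ≤ w j * Q t ω j ^ 2 :=
      fun j _ => mul_nonneg (hw j).le (sq_nonneg _)
    have := Finset.sum_nonneg this
    linarith
  set A := ∫ ω, lyap w (Q 0 ω) ∂(ℙ : Measure Ω) with hA
  have hA0 : 0 ≤ A := integral_nonneg fun ω => hLnn 0 ω
  have hEL : ∀ t, ∫ ω, lyap w (Q t ω) ∂(ℙ : Measure Ω) ≤ A + B * t := by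
    intro t
    induction t with
    | zero => simp [hA]
    | succ t ih =>
      have hint : Integrable (fun ω => lyap w (Q (t + 1) ω) - lyap w (Q t ω)) ℙ :=
        (hLint (t + 1)).sub (hLint t)
      have h1 : ∫ ω, (lyap w (Q (t + 1) ω) - lyap w (Q t ω)) ∂(ℙ : Measure Ω) ≤ B := by
        rw [← integral_condExp (hm0 t) (f := fun ω => lyap w (Q (t + 1) ω) - lyap w (Q t ω))]
        calc ∫ ω, ((ℙ : Measure Ω)[fun ω' => lyap w (Q (t + 1) ω') - lyap w (Q t ω') | qHist Q t]) ω ∂(ℙ : Measure Ω)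
            ≤ ∫ _ω, B ∂(ℙ : Measure Ω) :=
              integral_mono_ae integrable_condExp (integrable_const B) (hdrift t)
          _ = B := by simp
      have h2 := integral_sub (hLint (t + 1)) (hLint t)
      have h3 : ∫ ω, lyap w (Q (t + 1) ω) ∂(ℙ : Measure Ω)
          = (∫ ω, lyap w (Q t ω) ∂(ℙ : Measure Ω))
            + ∫ ω, (lyap w (Q (t + 1) ω) - lyap w (Q t ω)) ∂(ℙ : Measure Ω) := by
        rw [h2]; ring
      rw [h3]
      push_cast
      linarith
  -- coordinate measurability
  have hQc : ∀ t k, Measurable (fun ω => Q t ω k) := fun t k =>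
    (measurable_pi_apply k).comp (hQm t)
  -- pointwise bound of the square by the Lyapunov function
  have hptw : ∀ t k ω, (Q t ω k) ^ 2 ≤ (2 / w k) * lyap w (Q t ω) := by
    intro t k ω
    have h1 : w k * (Q t ω k) ^ 2 ≤ ∑ j, w j * (Q t ω j) ^ 2 :=
      Finset.single_le_sum (fun j _ => mul_nonneg (hw j).le (sq_nonneg _)) (Finset.mem_univ k)
    have hwk := hw k
    unfold lyap
    rw [div_mul_eq_mul_div, mul_comm, ← div_mul_eq_mul_div]
    have h2 : (Q t ω k) ^ 2 ≤ (∑ j, w j * (Q t ω j) ^ 2) / w k := by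
      rw [le_div_iff₀ hwk, mul_comm]
      exact h1
    calc (Q t ω k) ^ 2 ≤ (∑ j, w j * (Q t ω j) ^ 2) / w k := h2
      _ = (∑ j, w j * Q t ω j ^ 2) / w k * (1 / 2) * 2 := by ring
      _ = _ := by ring
  have hQsqInt : ∀ t k, Integrable (fun ω => (Q t ω k) ^ 2) ℙ := by
    intro t k
    apply Integrable.mono' ((hLint t).const_mul (2 / w k))
      ((hQc t k).pow_const 2).aestronglyMeasurable
    filter_upwards with ω
    rw [Real.norm_eq_abs, abs_of_nonneg (sq_nonneg _)]
    exact hptw t k ω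
  have hEQ : ∀ t k, ∫ ω, (Q t ω k) ^ 2 ∂(ℙ : Measure Ω) ≤ (2 / w k) * (A + B * t) := by
    intro t k
    calc ∫ ω, (Q t ω k) ^ 2 ∂(ℙ : Measure Ω)
        ≤ ∫ ω, (2 / w k) * lyap w (Q t ω) ∂(ℙ : Measure Ω) :=
          integral_mono (hQsqInt t k) ((hLint t).const_mul _) (hptw t k)
      _ = (2 / w k) * ∫ ω, lyap w (Q t ω) ∂(ℙ : Measure Ω) := integral_const_mul _ _
      _ ≤ (2 / w k) * (A + B * t) := by
          apply mul_le_mul_of_nonneg_left (hEL t)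
          exact (div_pos two_pos (hw k)).le
  rw [ae_all_iff]
  intro k
  -- block increment sums
  set S : ℕ → Ω → ℝ := fun n ω =>
    ∑ s ∈ Finset.Ico (n ^ 2) ((n + 1) ^ 2), |Q (s + 1) ω k - Q s ω k| with hS
  have hSnn : ∀ n ω, 0 ≤ S n ω := fun n ω =>
    Finset.sum_nonneg fun s _ => abs_nonneg _
  have hSm : ∀ n, Measurable (S n) := fun n =>
    Finset.measurable_sum _ fun s _ => ((hQc (s + 1) k).sub (hQc s k)).abs
  have hcard : ∀ n : ℕ, ((Finset.Ico (n ^ 2) ((n + 1) ^ 2)).card : ℝ) = 2 * n + 1 := by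
    intro n
    rw [Nat.card_Ico]
    have he : (n + 1) ^ 2 - n ^ 2 = 2 * n + 1 := by
      have e1 : (n + 1) ^ 2 = n ^ 2 + (2 * n + 1) := by ring
      omega
    rw [he]
    push_cast
    ring
  have hS2ptw : ∀ n ω, (S n ω) ^ 2
      ≤ (2 * (n : ℝ) + 1) * ∑ s ∈ Finset.Ico (n ^ 2) ((n + 1) ^ 2), (Q (s + 1) ω k - Q s ω k) ^ 2 := by
    intro n ω
    have h := sq_sum_le_card_mul_sum_sq
      (s := Finset.Ico (n ^ 2) ((n + 1) ^ 2)) (f := fun s => |Q (s + 1) ω k - Q s ω k|)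
    simp only [sq_abs] at h
    calc (S n ω) ^ 2 ≤ ((Finset.Ico (n ^ 2) ((n + 1) ^ 2)).card : ℝ)
          * ∑ s ∈ Finset.Ico (n ^ 2) ((n + 1) ^ 2), (Q (s + 1) ω k - Q s ω k) ^ 2 := h
      _ = _ := by rw [hcard]
  have hsumInt : ∀ n, Integrable
      (fun ω => ∑ s ∈ Finset.Ico (n ^ 2) ((n + 1) ^ 2), (Q (s + 1) ω k - Q s ω k) ^ 2) ℙ :=
    fun n => integrable_finset_sum _ fun s _ => hdint s k
  have hSint2 : ∀ n, Integrable (fun ω => (S n ω) ^ 2) ℙ := by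
    intro n
    apply Integrable.mono' ((hsumInt n).const_mul (2 * (n : ℝ) + 1))
      ((hSm n).pow_const 2).aestronglyMeasurable
    filter_upwards with ω
    rw [Real.norm_eq_abs, abs_of_nonneg (sq_nonneg _)]
    exact hS2ptw n ω
  have hES : ∀ n, ∫ ω, (S n ω) ^ 2 ∂(ℙ : Measure Ω) ≤ (2 * (n : ℝ) + 1) ^ 2 * D := by
    intro n
    have h1 : ∫ ω, (S n ω) ^ 2 ∂(ℙ : Measure Ω)
        ≤ ∫ ω, (2 * (n : ℝ) + 1)
            * ∑ s ∈ Finset.Ico (n ^ 2) ((n + 1) ^ 2), (Q (s + 1) ω k - Q s ω k) ^ 2 ∂(ℙ : Measure Ω) :=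
      integral_mono (hSint2 n) ((hsumInt n).const_mul _) (hS2ptw n)
    rw [integral_const_mul, integral_finset_sum _ (fun s _ => hdint s k)] at h1
    have h2 : ∑ s ∈ Finset.Ico (n ^ 2) ((n + 1) ^ 2),
        ∫ ω, (Q (s + 1) ω k - Q s ω k) ^ 2 ∂(ℙ : Measure Ω) ≤ (2 * (n : ℝ) + 1) * D := by
      calc _ ≤ ((Finset.Ico (n ^ 2) ((n + 1) ^ 2)).card : ℕ) • D :=
            Finset.sum_le_card_nsmul _ _ D (fun s _ => hd s k)
        _ = ((Finset.Ico (n ^ 2) ((n + 1) ^ 2)).card : ℝ) * D := by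
            rw [nsmul_eq_mul]
        _ = (2 * (n : ℝ) + 1) * D := by rw [hcard]
    have hn1 : (0:ℝ) ≤ 2 * (n : ℝ) + 1 := by positivity
    nlinarith
  -- the dominating sequence
  set X : ℕ → Ω → ℝ := fun n ω => (|Q (n ^ 2) ω k| + S n ω) / ((n : ℝ) ^ 2) with hX
  have hXnn : ∀ n ω, 0 ≤ X n ω := fun n ω =>
    div_nonneg (add_nonneg (abs_nonneg _) (hSnn n ω)) (sq_nonneg _)
  have hXm : ∀ n, Measurable (X n) := fun n =>
    ((hQc (n ^ 2) k).abs.add (hSm n)).div_const _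
  have hXsq_ptw : ∀ n : ℕ, ∀ ω, (X n ω) ^ 2
      ≤ (2 * (Q (n ^ 2) ω k) ^ 2 + 2 * (S n ω) ^ 2) / ((n : ℝ) ^ 2) ^ 2 := by
    intro n ω
    have h1 : (X n ω) ^ 2 = (|Q (n ^ 2) ω k| + S n ω) ^ 2 / ((n : ℝ) ^ 2) ^ 2 := by
      rw [hX, div_pow]
    rw [h1]
    gcongr
    nlinarith [sq_nonneg (|Q (n ^ 2) ω k| - S n ω), sq_abs (Q (n ^ 2) ω k)]
  have hbndInt : ∀ n : ℕ, Integrable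
      (fun ω => (2 * (Q (n ^ 2) ω k) ^ 2 + 2 * (S n ω) ^ 2) / ((n : ℝ) ^ 2) ^ 2) ℙ :=
    fun n => (((hQsqInt (n ^ 2) k).const_mul 2).add ((hSint2 n).const_mul 2)).div_const _
  have hXint : ∀ n : ℕ, Integrable (fun ω => (X n ω) ^ 2) ℙ := by
    intro n
    apply Integrable.mono' (hbndInt n) ((hXm n).pow_const 2).aestronglyMeasurable
    filter_upwards with ω
    rw [Real.norm_eq_abs, abs_of_nonneg (sq_nonneg _)]
    exact hXsq_ptw n ω
  set C : ℝ := (4 / w k) * (A + B) + 18 * D with hC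
  have hXb : ∀ m : ℕ, ∫ ω, (X (m + 1) ω) ^ 2 ∂(ℙ : Measure Ω) ≤ C / ((m : ℝ) + 1) ^ 2 := by
    intro m
    set n : ℕ := m + 1 with hn
    set x : ℝ := (n : ℝ) with hxdef
    have hx1 : (1 : ℝ) ≤ x := by rw [hxdef, hn]; push_cast; linarith [Nat.cast_nonneg (α := ℝ) m]
    have hx0 : (0 : ℝ) < x := lt_of_lt_of_le one_pos hx1
    have hInt : ∫ ω, (X n ω) ^ 2 ∂(ℙ : Measure Ω)
        ≤ (2 * (∫ ω, (Q (n ^ 2) ω k) ^ 2 ∂(ℙ : Measure Ω))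
            + 2 * (∫ ω, (S n ω) ^ 2 ∂(ℙ : Measure Ω))) / (x ^ 2) ^ 2 := by
      have h1 := integral_mono (hXint n) (hbndInt n) (hXsq_ptw n)
      rw [integral_div, integral_add ((hQsqInt (n ^ 2) k).const_mul 2) ((hSint2 n).const_mul 2),
        integral_const_mul, integral_const_mul] at h1
      exact h1
    have hq : ∫ ω, (Q (n ^ 2) ω k) ^ 2 ∂(ℙ : Measure Ω) ≤ (2 / w k) * (A + B * x ^ 2) := by
      have := hEQ (n ^ 2) k
      have hc : ((n ^ 2 : ℕ) : ℝ) = x ^ 2 := by push_cast [hxdef]; ring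
      rwa [hc] at this
    have hs := hES n
    have hwk : (0 : ℝ) < 2 / w k := div_pos two_pos (hw k)
    have hAx : A + B * x ^ 2 ≤ (A + B) * x ^ 2 := by nlinarith [mul_nonneg hA0 (by nlinarith : (0:ℝ) ≤ x ^ 2 - 1)]
    have h9 : (2 * x + 1) ^ 2 ≤ 9 * x ^ 2 := by nlinarith
    have hnum : 2 * (∫ ω, (Q (n ^ 2) ω k) ^ 2 ∂(ℙ : Measure Ω))
        + 2 * (∫ ω, (S n ω) ^ 2 ∂(ℙ : Measure Ω)) ≤ C * x ^ 2 := by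
      have e1 : 2 * (∫ ω, (Q (n ^ 2) ω k) ^ 2 ∂(ℙ : Measure Ω)) ≤ (4 / w k) * ((A + B) * x ^ 2) := by
        have := (hq.trans (mul_le_mul_of_nonneg_left hAx hwk.le))
        calc 2 * (∫ ω, (Q (n ^ 2) ω k) ^ 2 ∂(ℙ : Measure Ω)) ≤ 2 * ((2 / w k) * ((A + B) * x ^ 2)) := by linarith
          _ = (4 / w k) * ((A + B) * x ^ 2) := by ring
      have e2 : 2 * (∫ ω, (S n ω) ^ 2 ∂(ℙ : Measure Ω)) ≤ 18 * D * x ^ 2 := by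
        have h2 : (2 * x + 1) ^ 2 * D ≤ 9 * x ^ 2 * D := mul_le_mul_of_nonneg_right h9 hD.le
        calc 2 * (∫ ω, (S n ω) ^ 2 ∂(ℙ : Measure Ω)) ≤ 2 * ((2 * x + 1) ^ 2 * D) := by
              have := hES n; rw [← hxdef] at this; linarith
          _ ≤ 2 * (9 * x ^ 2 * D) := by linarith
          _ = 18 * D * x ^ 2 := by ring
      rw [hC]; nlinarith
    have hfin : (C * x ^ 2) / (x ^ 2) ^ 2 = C / x ^ 2 := by
      field_simp
    have hmcast : ((m : ℝ) + 1) = x := by rw [hxdef, hn]; push_cast; ring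
    rw [hmcast]
    calc ∫ ω, (X n ω) ^ 2 ∂(ℙ : Measure Ω)
        ≤ (2 * (∫ ω, (Q (n ^ 2) ω k) ^ 2 ∂(ℙ : Measure Ω))
            + 2 * (∫ ω, (S n ω) ^ 2 ∂(ℙ : Measure Ω))) / (x ^ 2) ^ 2 := hInt
      _ ≤ (C * x ^ 2) / (x ^ 2) ^ 2 := by
          apply div_le_div_of_nonneg_right hnum (pow_pos (pow_pos hx0 2) 2).le
      _ = C / x ^ 2 := hfin
  have hae := aux_ae_tendsto (fun m ω => X (m + 1) ω) (fun m ω => hXnn (m + 1) ω)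
    (fun m => hXm (m + 1)) (fun m => hXint (m + 1)) C hXb
  filter_upwards [hae] with ω hω
  apply aux_det _ (fun n => X n ω) _ hω
  intro t ht
  set n : ℕ := Nat.sqrt t with hn
  have hn1 : 1 ≤ n := by
    rw [hn]
    exact Nat.le_sqrt.mpr (by omega)
  have hts : n ^ 2 ≤ t := Nat.sqrt_le' t
  have htu : t < (n + 1) ^ 2 := Nat.lt_succ_sqrt' t
  have htel : Q t ω k - Q (n ^ 2) ω k
      = ∑ s ∈ Finset.Ico (n ^ 2) t, (Q (s + 1) ω k - Q s ω k) := by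
    rw [Finset.sum_Ico_eq_sub _ hts, Finset.sum_range_sub (fun s => Q s ω k) t,
      Finset.sum_range_sub (fun s => Q s ω k) (n ^ 2)]
    ring
  have habs : |Q t ω k| ≤ |Q (n ^ 2) ω k| + S n ω := by
    have h1 : |Q t ω k| ≤ |Q (n ^ 2) ω k| + |Q t ω k - Q (n ^ 2) ω k| := by
      have h := abs_add_le (Q (n ^ 2) ω k) (Q t ω k - Q (n ^ 2) ω k)
      simpa using h
    have h2 : |Q t ω k - Q (n ^ 2) ω k|
        ≤ ∑ s ∈ Finset.Ico (n ^ 2) t, |Q (s + 1) ω k - Q s ω k| := by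
      rw [htel]
      exact Finset.abs_sum_le_sum_abs _ _
    have h3 : ∑ s ∈ Finset.Ico (n ^ 2) t, |Q (s + 1) ω k - Q s ω k| ≤ S n ω := by
      rw [hS]
      exact Finset.sum_le_sum_of_subset_of_nonneg
        (Finset.Ico_subset_Ico_right htu.le) (fun s _ _ => abs_nonneg _)
    linarith
  have hn0 : (0 : ℝ) < (n : ℝ) ^ 2 := by
    have : (0:ℕ) < n := hn1
    positivity
  have hnt : ((n : ℝ)) ^ 2 ≤ (t : ℝ) := by
    have : ((n ^ 2 : ℕ) : ℝ) ≤ (t : ℝ) := Nat.cast_le.mpr hts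
    push_cast at this
    linarith
  have ht0 : (0 : ℝ) < (t : ℝ) := lt_of_lt_of_le hn0 hnt
  show |Q t ω k / (t : ℝ)| ≤ X n ω
  have hXval : X n ω = (|Q (n ^ 2) ω k| + S n ω) / ((n : ℝ) ^ 2) := by rw [hX]
  rw [hXval, abs_div, abs_of_nonneg ht0.le]
  exact div_le_div₀ (add_nonneg (abs_nonneg _) (hSnn n ω)) habs hn0 hnt
end
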